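/- arXiv:2009.00222 — 11 statements merged into one kernel-verified Lean document; each statement's English description precedes it below -/
import Mathlib

section
/- In an edge-colored graph, if every pair of distinct vertices is separated by a monochromatic edge-cut (i.e., the coloring is an MD-coloring), then for every triangle in the graph, all three edges of the triangle receive the same color. -/
open SimpleGraph

variable {V : Type*}

/-- Color `i` separates `u` and `v`: there is an edge-cut, all of whose edges
have color `i`, whose removal disconnects `u` from `v`. -/
def separatesColor (G : SimpleGraph V) (Γ : Sym2 V → ℕ) (i : ℕ) (u v : V) : Prop :=
  ∃ F : Set (Sym2 V), F ⊆ G.edgeSet ∧ (∀ e ∈ F, Γ e = i) ∧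
    ¬ ((G.deleteEdges F).Reachable u v)

/-- An MD-coloring: every pair of distinct vertices is separated by a
monochromatic edge-cut. -/
def IsMDColoring (G : SimpleGraph V) (Γ : Sym2 V → ℕ) : Prop :=
  ∀ u v : V, u ≠ v → ∃ i, separatesColor G Γ i u v

/-- The monochromatic disconnection number: the maximum number of colors
used by an MD-coloring. -/
noncomputable def mdNumber (G : SimpleGraph V) : ℕ :=
  sSup {k | ∃ Γ : Sym2 V → ℕ, IsMDColoring G Γ ∧ (Γ '' G.edgeSet).ncard = k}

lemma sep_tri (G : SimpleGraph V) (Γ : Sym2 V → ℕ) {i : ℕ} {a b c : V}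
    (hab : G.Adj a b) (hac : G.Adj a c) (hcb : G.Adj c b)
    (h : separatesColor G Γ i a b) :
    Γ s(a, b) = i ∧ (Γ s(a, c) = i ∨ Γ s(c, b) = i) := by
  obtain ⟨F, hF, hcol, hreach⟩ := h
  have h1 : s(a, b) ∈ F := by
    by_contra h
    exact hreach ((SimpleGraph.deleteEdges_adj).mpr ⟨hab, h⟩).reachable
  have h2 : s(a, c) ∈ F ∨ s(c, b) ∈ F := by
    by_contra h
    push_neg at h
    exact hreach (((SimpleGraph.deleteEdges_adj).mpr ⟨hac, h.1⟩).reachable.trans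
      ((SimpleGraph.deleteEdges_adj).mpr ⟨hcb, h.2⟩).reachable)
  exact ⟨hcol _ h1, h2.imp (hcol _) (hcol _)⟩

/-- In an MD-colored graph, every triangle is monochromatic. -/
theorem stmt_0 [Fintype V] (G : SimpleGraph V) (Γ : Sym2 V → ℕ)
    (hΓ : IsMDColoring G Γ) (a b c : V)
    (hab : G.Adj a b) (hbc : G.Adj b c) (hac : G.Adj a c) :
    Γ s(a, b) = Γ s(b, c) ∧ Γ s(b, c) = Γ s(a, c) := by
  obtain ⟨i, hi⟩ := hΓ a b hab.ne
  obtain ⟨j, hj⟩ := hΓ b c hbc.ne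
  obtain ⟨k, hk⟩ := hΓ a c hac.ne
  have h1 := sep_tri G Γ hab hac hbc.symm hi
  have h2 := sep_tri G Γ hbc hab.symm hac hj
  have h3 := sep_tri G Γ hac hab hbc hk
  rw [Sym2.eq_swap (a := c) (b := b)] at h1
  rw [Sym2.eq_swap (a := b) (b := a)] at h2
  omega
end

section
/- In an edge-colored graph with an MD-coloring, for every 4-cycle in the graph, each pair of opposite (non-adjacent) edges of the cycle receives the same color. -/
open SimpleGraph

variable {V : Type*}

/-- If deleting `F` disconnects the endpoints of an edge, that edge is in `F`. -/
lemma aux_cross {G : SimpleGraph V} {F : Set (Sym2 V)} {u v : V}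
    (h : G.Adj u v) (hr : ¬ (G.deleteEdges F).Reachable u v) : s(u, v) ∈ F := by
  by_contra hne
  exact hr (SimpleGraph.Adj.reachable (by simp [SimpleGraph.deleteEdges_adj, h, hne]))

/-- If deleting `F` disconnects the endpoints of a path of length 2,
some edge of the path is in `F`. -/
lemma aux_cross2 {G : SimpleGraph V} {F : Set (Sym2 V)} {u v w : V}
    (h1 : G.Adj u v) (h2 : G.Adj v w) (hr : ¬ (G.deleteEdges F).Reachable u w) :
    s(u, v) ∈ F ∨ s(v, w) ∈ F := by
  by_cases hrv : (G.deleteEdges F).Reachable u v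
  · exact Or.inr (aux_cross h2 fun h => hr (hrv.trans h))
  · exact Or.inl (aux_cross h1 hrv)

/-- If deleting `F` disconnects the endpoints of a path of length 3,
some edge of the path is in `F`. -/
lemma aux_cross3 {G : SimpleGraph V} {F : Set (Sym2 V)} {u v w x : V}
    (h1 : G.Adj u v) (h2 : G.Adj v w) (h3 : G.Adj w x)
    (hr : ¬ (G.deleteEdges F).Reachable u x) :
    s(u, v) ∈ F ∨ s(v, w) ∈ F ∨ s(w, x) ∈ F := by
  by_cases hrv : (G.deleteEdges F).Reachable u v
  · exact Or.inr (aux_cross2 h2 h3 fun h => hr (hrv.trans h))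
  · exact Or.inl (aux_cross h1 hrv)

/-- One pair of opposite edges of a 4-cycle gets the same color. -/
lemma aux_opp {G : SimpleGraph V} {Γ : Sym2 V → ℕ}
    (hΓ : IsMDColoring G Γ) {a b c d : V} (hac : a ≠ c) (hbd : b ≠ d)
    (hab : G.Adj a b) (hbc : G.Adj b c) (hcd : G.Adj c d) (hda : G.Adj d a) :
    Γ s(a, b) = Γ s(c, d) := by
  by_contra hxz
  -- cut separating c and d
  obtain ⟨i1, F1, _, m1, r1⟩ := hΓ c d hcd.ne
  have e1 : Γ s(c, d) = i1 := m1 _ (aux_cross hcd r1)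
  have h1 : Γ s(c, b) = i1 ∨ Γ s(b, a) = i1 ∨ Γ s(a, d) = i1 := by
    rcases aux_cross3 hbc.symm hab.symm hda.symm r1 with h | h | h
    · exact Or.inl (m1 _ h)
    · exact Or.inr (Or.inl (m1 _ h))
    · exact Or.inr (Or.inr (m1 _ h))
  -- cut separating a and b
  obtain ⟨i2, F2, _, m2, r2⟩ := hΓ a b hab.ne
  have e2 : Γ s(a, b) = i2 := m2 _ (aux_cross hab r2)
  have h2 : Γ s(a, d) = i2 ∨ Γ s(d, c) = i2 ∨ Γ s(c, b) = i2 := by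
    rcases aux_cross3 hda.symm hcd.symm hbc.symm r2 with h | h | h
    · exact Or.inl (m2 _ h)
    · exact Or.inr (Or.inl (m2 _ h))
    · exact Or.inr (Or.inr (m2 _ h))
  -- cut separating a and c
  obtain ⟨i3, F3, _, m3, r3⟩ := hΓ a c hac
  have h3 : Γ s(a, b) = i3 ∨ Γ s(b, c) = i3 := by
    rcases aux_cross2 hab hbc r3 with h | h
    · exact Or.inl (m3 _ h)
    · exact Or.inr (m3 _ h)
  have h3' : Γ s(a, d) = i3 ∨ Γ s(d, c) = i3 := by
    rcases aux_cross2 hda.symm hcd.symm r3 with h | h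
    · exact Or.inl (m3 _ h)
    · exact Or.inr (m3 _ h)
  -- cut separating b and d
  obtain ⟨i4, F4, _, m4, r4⟩ := hΓ b d hbd
  have h4 : Γ s(b, a) = i4 ∨ Γ s(a, d) = i4 := by
    rcases aux_cross2 hab.symm hda.symm r4 with h | h
    · exact Or.inl (m4 _ h)
    · exact Or.inr (m4 _ h)
  have h4' : Γ s(b, c) = i4 ∨ Γ s(c, d) = i4 := by
    rcases aux_cross2 hbc hcd r4 with h | h
    · exact Or.inl (m4 _ h)
    · exact Or.inr (m4 _ h)
  rw [Sym2.eq_swap (a := c) (b := b)] at h1 h2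
  rw [Sym2.eq_swap (a := b) (b := a)] at h1 h4
  rw [Sym2.eq_swap (a := a) (b := d)] at h1 h2 h3' h4
  rw [Sym2.eq_swap (a := d) (b := c)] at h2 h3'
  rcases h1 with h1 | h1 | h1 <;> rcases h2 with h2 | h2 | h2 <;>
    rcases h3 with h3 | h3 <;> rcases h3' with h3' | h3' <;>
    rcases h4 with h4 | h4 <;> rcases h4' with h4' | h4' <;> omega

/-- In an MD-colored graph, opposite edges of any 4-cycle have the same color. -/
theorem stmt_1 [Fintype V] (G : SimpleGraph V) (Γ : Sym2 V → ℕ)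
    (hΓ : IsMDColoring G Γ) (a b c d : V) (hac : a ≠ c) (hbd : b ≠ d)
    (hab : G.Adj a b) (hbc : G.Adj b c) (hcd : G.Adj c d) (hda : G.Adj d a) :
    Γ s(a, b) = Γ s(c, d) ∧ Γ s(b, c) = Γ s(d, a) := by
  exact ⟨aux_opp hΓ hac hbd hab hbc hcd hda,
         aux_opp hΓ hbd hac.symm hbc hcd hda hab⟩
end

section
/- For every connected graph G on n ≥ 2 vertices, md(G) = n − 1 if and only if G is a tree. -/
open SimpleGraph

variable {V : Type*}

/-! Every color of an MD-coloring occurs on every spanning tree `T`: otherwise `T` survives the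
deletion of that color class, which must separate the ends of an edge of that color. Hence at
most `n - 1` colors are used, and a tree attains `n - 1` since each of its edges is a bridge.
If `n - 1` colors are used, the edges of `T` get pairwise distinct colors. An edge `uv` outside
`T` closes a cycle with the `T`-path from `u` to `v`; that path has an edge `xy` colored
differently from `uv`, and deleting the color class of `xy` leaves `x` and `y` joined around
the cycle, a contradiction. -/

section Coloring

variable {G T : SimpleGraph V} {Γ : Sym2 V → ℕ} {u v : V}

theorem isMDColoring_const (G : SimpleGraph V) (i : ℕ) : IsMDColoring G fun _ => i :=
  fun u v huv => ⟨i, G.edgeSet, subset_rfl, fun _ _ => rfl, by simpa using huv⟩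

theorem SimpleGraph.IsAcyclic.isMDColoring (hG : G.IsAcyclic) (Γ : Sym2 V → ℕ) :
    IsMDColoring G Γ := by
  intro u v huv
  by_cases hreach : G.Reachable u v
  · obtain ⟨p, hp⟩ := hreach.exists_isPath
    cases p with
    | nil => exact absurd rfl huv
    | @cons _ c _ hadj q =>
      refine ⟨Γ s(u, c), {s(u, c)}, by simpa using hadj, by simp, fun hr => ?_⟩
      have hq : s(u, c) ∉ q.edges := fun h =>
        ((Walk.cons_isPath_iff _ _).1 hp).2 (q.fst_mem_support_of_mem_edges h)
      exact isAcyclic_iff_forall_adj_isBridge.1 hG hadj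
        (hr.trans (reachable_deleteEdges_iff_exists_walk.2 ⟨q, hq⟩).symm)
  · exact ⟨0, ∅, Set.empty_subset _, by simp, by simpa using hreach⟩

theorem IsMDColoring.not_reachable_deleteEdges (hΓ : IsMDColoring G Γ) (h : G.Adj u v) :
    ¬ (G.deleteEdges {e | Γ e = Γ s(u, v)}).Reachable u v := by
  obtain ⟨i, F, -, hFi, hF⟩ := hΓ u v h.ne
  have huvF : s(u, v) ∈ F := by
    by_contra huvF
    exact hF (Adj.reachable (by simpa using ⟨h, huvF⟩))
  refine fun hr => hF (hr.mono (deleteEdges_anti fun e he => ?_))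
  rw [Set.mem_ofPred_eq, hFi e he, hFi _ huvF]

theorem IsMDColoring.image_edgeSet_subset (hΓ : IsMDColoring G Γ) (hle : T ≤ G)
    (hT : T.Connected) : Γ '' G.edgeSet ⊆ Γ '' T.edgeSet := by
  rintro _ ⟨e, he, rfl⟩
  obtain ⟨u, v⟩ := e
  by_contra hmiss
  refine hΓ.not_reachable_deleteEdges he ((hT.preconnected u v).mono fun a b hab => ?_)
  exact (deleteEdges_adj ..).2 ⟨hle hab, fun hcol => hmiss ⟨_, hab, hcol⟩⟩

theorem IsMDColoring.adj_of_injOn (hΓ : IsMDColoring G Γ) (hle : T ≤ G) (hT : T.IsTree)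
    (hinj : Set.InjOn Γ T.edgeSet) (h : G.Adj u v) : T.Adj u v := by
  classical
  by_contra hTuv
  obtain ⟨p, hp⟩ := hT.connected.exists_isPath v u
  have huvp : s(u, v) ∉ p.edges := fun hmem => hTuv (p.adj_of_mem_edges hmem)
  have hlen : 1 < p.length := by
    have h0 : p.length ≠ 0 := fun hl => h.ne (Walk.eq_of_length_eq_zero hl).symm
    have h1 : p.length ≠ 1 := fun hl => hTuv (Walk.adj_of_length_eq_one hl).symm
    omega
  obtain ⟨e, hep, hne⟩ : ∃ e ∈ p.edges, Γ e ≠ Γ s(u, v) := by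
    have hcard : 1 < (p.edges.toFinset.image Γ).card := by
      rwa [Finset.card_image_of_injOn (hinj.mono fun e he => p.edges_subset_edgeSet
        (List.mem_toFinset.1 he)), List.toFinset_card_of_nodup hp.edges_nodup,
        Walk.length_edges]
    obtain ⟨_, hc, hne⟩ := Finset.exists_mem_ne hcard (Γ s(u, v))
    obtain ⟨e, he, rfl⟩ := Finset.mem_image.1 hc
    exact ⟨e, List.mem_toFinset.1 he, hne⟩
  obtain ⟨x, y⟩ := e
  have hHuv : (T ⊔ edge u v).Adj u v := Or.inr ((edge_adj ..).2 ⟨Or.inl ⟨rfl, rfl⟩, h.ne⟩)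
  have hcycle : (Walk.cons hHuv (p.mapLe le_sup_left)).IsCycle :=
    (Walk.cons_isCycle_iff _ _).2 ⟨hp.mapLe _, by rwa [Walk.edges_mapLe_eq_edges]⟩
  have hxy : ((T ⊔ edge u v).deleteEdges {s(x, y)}).Reachable x y := by
    by_contra hbridge
    exact (isBridge_iff.2 hbridge).notMem_edges_of_isCycle hcycle (by simp [hep])
  refine hΓ.not_reachable_deleteEdges (hle (p.adj_of_mem_edges hep))
    (hxy.mono fun a b hab => ?_)
  obtain ⟨hab | hab, hnxy⟩ := (deleteEdges_adj ..).1 hab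
  · refine (deleteEdges_adj ..).2 ⟨hle hab, fun hcol => hnxy ?_⟩
    exact hinj hab (p.edges_subset_edgeSet hep) hcol
  · obtain ⟨⟨rfl, rfl⟩ | ⟨rfl, rfl⟩, -⟩ := (edge_adj ..).1 hab
    · exact (deleteEdges_adj ..).2 ⟨h, fun hcol => hne hcol.symm⟩
    · refine (deleteEdges_adj ..).2 ⟨h.symm, fun hcol => hne ?_⟩
      rw [Set.mem_ofPred_eq, Sym2.eq_swap] at hcol
      exact hcol.symm

end Coloring

def mdColorCounts (G : SimpleGraph V) : Set ℕ :=
  {k | ∃ Γ : Sym2 V → ℕ, IsMDColoring G Γ ∧ (Γ '' G.edgeSet).ncard = k}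

section Finite

variable [Fintype V] {G T : SimpleGraph V} {Γ : Sym2 V → ℕ}

theorem SimpleGraph.IsTree.ncard_edgeSet (hT : T.IsTree) :
    T.edgeSet.ncard = Fintype.card V - 1 := by
  classical
  rw [Set.ncard_eq_toFinset_card' T.edgeSet, ← hT.card_edgeFinset]
  rfl

theorem IsMDColoring.ncard_image_edgeSet_le (hΓ : IsMDColoring G Γ) (hG : G.Connected) :
    (Γ '' G.edgeSet).ncard ≤ Fintype.card V - 1 := by
  obtain ⟨T, hle, hT⟩ := hG.exists_isTree_le
  calc (Γ '' G.edgeSet).ncard ≤ (Γ '' T.edgeSet).ncard :=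
        Set.ncard_le_ncard (hΓ.image_edgeSet_subset hle hT.connected)
    _ ≤ T.edgeSet.ncard := Set.ncard_image_le
    _ = Fintype.card V - 1 := hT.ncard_edgeSet

theorem IsMDColoring.isTree_of_ncard_eq (hΓ : IsMDColoring G Γ) (hG : G.Connected)
    (hcard : (Γ '' G.edgeSet).ncard = Fintype.card V - 1) : G.IsTree := by
  obtain ⟨T, hle, hT⟩ := hG.exists_isTree_le
  have hinj : Set.InjOn Γ T.edgeSet := by
    refine Set.injOn_of_ncard_image_eq (le_antisymm Set.ncard_image_le ?_)
    calc T.edgeSet.ncard = (Γ '' G.edgeSet).ncard := by rw [hT.ncard_edgeSet, hcard]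
      _ ≤ (Γ '' T.edgeSet).ncard :=
        Set.ncard_le_ncard (hΓ.image_edgeSet_subset hle hT.connected)
  have hGT : G = T := le_antisymm (fun _ _ h => hΓ.adj_of_injOn hle hT hinj h) hle
  exact hGT ▸ hT

theorem card_sub_one_mem_upperBounds_mdColorCounts (hG : G.Connected) :
    Fintype.card V - 1 ∈ upperBounds (mdColorCounts G) :=
  fun _ ⟨_, hΓ, hk⟩ => hk ▸ hΓ.ncard_image_edgeSet_le hG

theorem mdNumber_le (hG : G.Connected) : mdNumber G ≤ Fintype.card V - 1 :=
  csSup_le' (card_sub_one_mem_upperBounds_mdColorCounts hG)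

theorem le_mdNumber (hG : G.Connected) (hΓ : IsMDColoring G Γ) :
    (Γ '' G.edgeSet).ncard ≤ mdNumber G :=
  le_csSup ⟨_, card_sub_one_mem_upperBounds_mdColorCounts hG⟩ ⟨Γ, hΓ, rfl⟩

theorem exists_isMDColoring_ncard_eq_mdNumber (hG : G.Connected) :
    ∃ Γ : Sym2 V → ℕ, IsMDColoring G Γ ∧ (Γ '' G.edgeSet).ncard = mdNumber G :=
  Nat.sSup_mem (s := mdColorCounts G) ⟨_, fun _ => 0, isMDColoring_const G 0, rfl⟩
    ⟨_, card_sub_one_mem_upperBounds_mdColorCounts hG⟩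

end Finite

theorem stmt_4_general [Fintype V] (G : SimpleGraph V) (hG : G.Connected) :
    mdNumber G = Fintype.card V - 1 ↔ G.IsTree := by
  constructor
  · intro hmd
    obtain ⟨Γ, hΓ, hcard⟩ := exists_isMDColoring_ncard_eq_mdNumber hG
    exact hΓ.isTree_of_ncard_eq hG (hcard.trans hmd)
  · intro hT
    obtain ⟨Γ, hΓ⟩ := Countable.exists_injective_nat (Sym2 V)
    refine le_antisymm (mdNumber_le hG) ?_
    calc Fintype.card V - 1 = (Γ '' G.edgeSet).ncard := by
          rw [Set.ncard_image_of_injective _ hΓ, hT.ncard_edgeSet]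
      _ ≤ mdNumber G := le_mdNumber hG (hT.isAcyclic.isMDColoring Γ)

/-- A connected graph on `n ≥ 2` vertices satisfies `md(G) = n - 1` iff `G`
is a tree. -/
theorem stmt_4 [Fintype V] (G : SimpleGraph V) (hG : G.Connected)
    (hn : 2 ≤ Fintype.card V) :
    mdNumber G = Fintype.card V - 1 ↔ G.IsTree :=
  stmt_4_general G hG
end

section
/- If C_n is the cycle on n ≥ 3 vertices, then md(C_n) = ⌊n/2⌋. -/
/-! Upper bound: a cut separating the ends of an edge `e` contains `e`, and if `e` is not a bridge
it contains a second edge, of the same color; so in a bridgeless graph every color is used at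
least twice. Lower bound: coloring the edge `s(i, i + 1)` of `Cₙ` by `i mod ⌊n/2⌋`, any two
vertices are separated by a pair of edges `⌊n/2⌋` apart, which share a color. -/

open SimpleGraph

variable {V : Type*}

open Finset

section General

variable {G : SimpleGraph V} {Γ : Sym2 V → ℕ}

theorem separatesColor.symm {i : ℕ} {u v : V} (h : separatesColor G Γ i u v) :
    separatesColor G Γ i v u :=
  let ⟨F, hFG, hFi, hF⟩ := h
  ⟨F, hFG, hFi, fun h ↦ hF h.symm⟩

theorem IsMDColoring.exists_ne_color_eq (hΓ : IsMDColoring G Γ) {e : Sym2 V}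
    (he : e ∈ G.edgeSet) (hb : ¬ G.IsBridge e) :
    ∃ e' ∈ G.edgeSet, e' ≠ e ∧ Γ e' = Γ e := by
  induction e using Sym2.ind with | _ u v => ?_
  rw [isBridge_iff, not_not] at hb
  obtain ⟨i, F, hFG, hFi, hF⟩ := hΓ u v (G.ne_of_adj he)
  have heF : s(u, v) ∈ F := by
    by_contra h
    exact hF ((deleteEdges_adj ..).mpr ⟨he, h⟩).reachable
  obtain ⟨e', he'F, he'⟩ : ∃ e' ∈ F, e' ≠ s(u, v) := by
    by_contra! h
    exact hF (hb.mono (deleteEdges_anti h))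
  exact ⟨e', hFG he'F, he', (hFi e' he'F).trans (hFi _ heF).symm⟩

theorem IsMDColoring.two_mul_ncard_image_le [Fintype G.edgeSet] (hΓ : IsMDColoring G Γ)
    (hG : ∀ e ∈ G.edgeSet, ¬ G.IsBridge e) :
    2 * (Γ '' G.edgeSet).ncard ≤ #G.edgeFinset := by
  classical
  rw [← coe_edgeFinset, ← coe_image, Set.ncard_coe_finset]
  refine mul_card_image_le_card _ _ fun c hc ↦ ?_
  obtain ⟨e, he, rfl⟩ := mem_image.mp hc
  rw [mem_edgeFinset] at he
  obtain ⟨e', he', hne, hcol⟩ := hΓ.exists_ne_color_eq he (hG e he)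
  calc 2 = #{e', e} := (card_pair hne).symm
    _ ≤ _ := card_le_card fun x hx ↦ by
      rcases mem_insert.mp hx with rfl | hx
      · simp [mem_edgeFinset.mpr he', hcol]
      · simp [mem_singleton.mp hx, mem_edgeFinset.mpr he]

end General

theorem card_edgeFinset_cycleGraph (n : ℕ) : #(cycleGraph (n + 3)).edgeFinset = n + 3 := by
  have := (cycleGraph (n + 3)).sum_degrees_eq_twice_card_edges
  simp only [cycleGraph_degree_three_le, sum_const, card_univ, Fintype.card_fin,
    smul_eq_mul] at this
  omega

theorem toFinset_edges_cycleGraph_cycle (n : ℕ) :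
    (cycleGraph.cycle n).edges.toFinset = (cycleGraph (n + 3)).edgeFinset := by
  refine eq_of_subset_of_card_le (fun e he ↦ ?_) ?_
  · exact mem_edgeFinset.mpr (Walk.edges_subset_edgeSet _ (List.mem_toFinset.mp he))
  · rw [card_edgeFinset_cycleGraph,
      List.toFinset_card_of_nodup cycleGraph.isCycle_cycle.isTrail.edges_nodup,
      Walk.length_edges, cycleGraph.length_cycle]

theorem not_isBridge_cycleGraph {n : ℕ} {e : Sym2 (Fin (n + 3))}
    (he : e ∈ (cycleGraph (n + 3)).edgeSet) :
    ¬ (cycleGraph (n + 3)).IsBridge e := by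
  refine fun hb ↦ hb.notMem_edges_of_isCycle cycleGraph.isCycle_cycle ?_
  rw [← List.mem_toFinset, toFinset_edges_cycleGraph_cycle, mem_edgeFinset]
  exact he

theorem IsMDColoring.ncard_image_le_cycleGraph {n : ℕ} {Γ : Sym2 (Fin (n + 3)) → ℕ}
    (hΓ : IsMDColoring (cycleGraph (n + 3)) Γ) :
    (Γ '' (cycleGraph (n + 3)).edgeSet).ncard ≤ (n + 3) / 2 := by
  have := hΓ.two_mul_ncard_image_le fun _ ↦ not_isBridge_cycleGraph
  rw [card_edgeFinset_cycleGraph] at this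
  omega

theorem cycleGraph_adj_add_one {n : ℕ} (a : Fin (n + 2)) :
    (cycleGraph (n + 2)).Adj a (a + 1) := by
  simp [cycleGraph_adj]

theorem not_reachable_deleteEdges_cycleGraph {n : ℕ} {a b x y : Fin (n + 2)}
    (hx : a.val < x.val ∧ x.val ≤ b.val) (hy : ¬ (a.val < y.val ∧ y.val ≤ b.val)) :
    ¬ ((cycleGraph (n + 2)).deleteEdges {s(a, a + 1), s(b, b + 1)}).Reachable x y := by
  rintro ⟨p⟩
  obtain ⟨⟨⟨z, w⟩, hzw⟩, -, hz, hw⟩ :=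
    p.exists_boundary_dart {z | a.val < z.val ∧ z.val ≤ b.val} hx hy
  simp only [Set.mem_ofPred_eq] at hz hw
  dsimp only at hzw
  rw [deleteEdges_adj, cycleGraph_adj, sub_eq_iff_eq_add', sub_eq_iff_eq_add'] at hzw
  obtain ⟨rfl | rfl, hne⟩ := hzw
  · rw [Fin.val_add_one] at hz
    split_ifs at hz with h
    · omega
    · obtain rfl : w = a := Fin.ext (by omega)
      exact hne (by simp [Sym2.eq_swap])
  · rw [Fin.val_add_one] at hw
    split_ifs at hw with h
    · obtain rfl : z = b := Fin.ext (by rw [h, Fin.val_last] at hz ⊢; omega)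
      exact hne (by simp)
    · obtain rfl : z = b := Fin.ext (by omega)
      exact hne (by simp)

/-- On `s(i, i + 1)` this is `i mod ⌊n/2⌋`; for the closing edge `s(n - 1, 0)` too, since
`(n - 1) / 2 ≡ n - 1 mod ⌊n/2⌋`. -/
def cycleColoring (n : ℕ) : Sym2 (Fin n) → ℕ :=
  Sym2.lift ⟨fun x y ↦ (x.val + y.val) / 2 % (n / 2), fun x y ↦ by
    dsimp only; rw [add_comm]⟩

theorem cycleColoring_lt {n : ℕ} (hn : 2 ≤ n) (e : Sym2 (Fin n)) :
    cycleColoring n e < n / 2 := by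
  induction e using Sym2.ind with
  | _ x y => exact Nat.mod_lt _ (by omega)

theorem div_two_mod_succ_div_two_eq_mod (m : ℕ) : m / 2 % ((m + 1) / 2) = m % ((m + 1) / 2) := by
  rcases Nat.even_or_odd' m with ⟨k, rfl | rfl⟩
  · rw [show (2 * k + 1) / 2 = k by omega, show 2 * k / 2 = k by omega, Nat.mul_mod_left,
      Nat.mod_self]
  · rw [show (2 * k + 1 + 1) / 2 = k + 1 by omega, show (2 * k + 1) / 2 = k by omega,
      show 2 * k + 1 = k + (k + 1) by omega, Nat.add_mod_right]

theorem cycleColoring_mk_add_one {n : ℕ} (a : Fin (n + 1)) :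
    cycleColoring (n + 1) s(a, a + 1) = a.val % ((n + 1) / 2) := by
  simp only [cycleColoring, Sym2.lift_mk, Fin.val_add_one]
  split_ifs with h
  · rw [h, Fin.val_last, add_zero, div_two_mod_succ_div_two_eq_mod]
  · rw [show (a.val + (a.val + 1)) / 2 = a.val by omega]

theorem separatesColor_cycleColoring {n : ℕ} {a b x y : Fin (n + 3)}
    (hab : b.val = a.val + (n + 3) / 2)
    (hx : a.val < x.val ∧ x.val ≤ b.val) (hy : ¬ (a.val < y.val ∧ y.val ≤ b.val)) :
    separatesColor (cycleGraph (n + 3)) (cycleColoring (n + 3)) (a.val % ((n + 3) / 2)) x y := by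
  refine ⟨{s(a, a + 1), s(b, b + 1)}, ?_, ?_, not_reachable_deleteEdges_cycleGraph hx hy⟩
  · rintro e (rfl | rfl) <;> exact cycleGraph_adj_add_one _
  · rintro e (rfl | rfl)
    · exact cycleColoring_mk_add_one a
    · rw [cycleColoring_mk_add_one, hab, Nat.add_mod_right]

theorem exists_separatesColor_cycleColoring_of_lt {n : ℕ} {u v : Fin (n + 3)}
    (huv : u.val < v.val) :
    ∃ i, separatesColor (cycleGraph (n + 3)) (cycleColoring (n + 3)) i u v := by
  by_cases hfar : u.val + (n + 3) / 2 < v.val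
  · let a : Fin (n + 3) := ⟨v.val - (n + 3) / 2, by omega⟩
    exact ⟨_, (separatesColor_cycleColoring (a := a) (b := v) (by simp only [a]; omega)
      (by simp only [a]; omega) (by simp only [a]; omega)).symm⟩
  by_cases hwrap : u.val + (n + 3) / 2 < n + 3
  · let b : Fin (n + 3) := ⟨u.val + (n + 3) / 2, hwrap⟩
    exact ⟨_, (separatesColor_cycleColoring (a := u) (b := b) rfl (by simp only [b]; omega)
      (by omega)).symm⟩
  · let a : Fin (n + 3) := ⟨u.val - (n + 3) / 2, by omega⟩
    exact ⟨_, separatesColor_cycleColoring (a := a) (b := u) (by simp only [a]; omega)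
      (by simp only [a]; omega) (by simp only [a]; omega)⟩

theorem isMDColoring_cycleColoring (n : ℕ) :
    IsMDColoring (cycleGraph (n + 3)) (cycleColoring (n + 3)) := by
  intro u v huv
  rcases Fin.lt_or_lt_of_ne huv with h | h
  · exact exists_separatesColor_cycleColoring_of_lt h
  · obtain ⟨i, hi⟩ := exists_separatesColor_cycleColoring_of_lt h
    exact ⟨i, hi.symm⟩

theorem ncard_image_cycleColoring (n : ℕ) :
    (cycleColoring (n + 3) '' (cycleGraph (n + 3)).edgeSet).ncard = (n + 3) / 2 := by
  suffices cycleColoring (n + 3) '' (cycleGraph (n + 3)).edgeSet = Set.Iio ((n + 3) / 2) by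
    rw [this, Set.ncard_Iio_nat]
  refine Set.Subset.antisymm ?_ fun c (hc : c < (n + 3) / 2) ↦ ?_
  · rintro _ ⟨e, -, rfl⟩
    exact cycleColoring_lt (by omega) e
  · let a : Fin (n + 3) := ⟨c, by omega⟩
    refine ⟨s(a, a + 1), cycleGraph_adj_add_one a, ?_⟩
    rw [cycleColoring_mk_add_one, Nat.mod_eq_of_lt hc]

/-- The cycle on `n ≥ 3` vertices has `md(Cₙ) = ⌊n / 2⌋`. -/
theorem stmt_5 (n : ℕ) (hn : 3 ≤ n) :
    mdNumber (SimpleGraph.cycleGraph n) = n / 2 := by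
  obtain ⟨m, rfl⟩ := Nat.exists_eq_add_of_le' hn
  refine IsGreatest.csSup_eq ⟨⟨cycleColoring (m + 3), isMDColoring_cycleColoring m,
    ncard_image_cycleColoring m⟩, ?_⟩
  rintro _ ⟨Γ, hΓ, rfl⟩
  exact hΓ.ncard_image_le_cycleGraph
end

section
/- If G is a connected graph and v is a new vertex joined to every vertex of G, then md(v ∨ G) = 1, where v ∨ G denotes the join of the single vertex v with G. -/
open SimpleGraph

variable {V : Type*}

/-- The join of a single new vertex with the graph `G`: the new vertex `none`
is adjacent to every vertex of `G`, and old vertices keep their adjacency. -/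
def joinOne (G : SimpleGraph V) : SimpleGraph (Option V) :=
  SimpleGraph.fromRel (fun x y =>
    x = none ∨ y = none ∨ ∃ a b, x = some a ∧ y = some b ∧ G.Adj a b)

lemma joinOne_adj_none {G : SimpleGraph V} (a : V) : (joinOne G).Adj none (some a) := by
  simp [joinOne, SimpleGraph.fromRel_adj]

lemma joinOne_adj_some_iff {G : SimpleGraph V} {a b : V} :
    (joinOne G).Adj (some a) (some b) ↔ G.Adj a b := by
  simp only [joinOne, SimpleGraph.fromRel_adj]
  constructor
  · rintro ⟨hne, h | h⟩ <;>
      rcases h with h | h | ⟨p, q, hp, hq, hpq⟩ <;>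
      simp_all [G.adj_comm]
  · intro h
    exact ⟨by simpa using h.ne, Or.inl (Or.inr (Or.inr ⟨a, b, rfl, rfl, h⟩))⟩

lemma joinOne_adj_some {G : SimpleGraph V} {a b : V} (h : G.Adj a b) :
    (joinOne G).Adj (some a) (some b) := joinOne_adj_some_iff.mpr h

/-- In an MD-coloring, a monochromatic cut separating adjacent vertices contains
the edge between them. -/
lemma cut_color_of_adj {W : Type*} {H : SimpleGraph W} {Γ : Sym2 W → ℕ} {i : ℕ}
    {u v : W} (huv : H.Adj u v) {F : Set (Sym2 W)}
    (hcol : ∀ e ∈ F, Γ e = i) (hsep : ¬ ((H.deleteEdges F).Reachable u v)) :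
    Γ s(u, v) = i := by
  by_contra hne
  have hmem : s(u, v) ∉ F := fun h => hne (hcol _ h)
  exact hsep ⟨SimpleGraph.Walk.cons (by simp [huv, hmem]) SimpleGraph.Walk.nil⟩

/-- In an MD-coloring, the three edges of a triangle receive the same color
(we only need two of the equalities). -/
lemma triangle_eq {W : Type*} {H : SimpleGraph W} {Γ : Sym2 W → ℕ}
    (hMD : IsMDColoring H Γ) {x y z : W}
    (hxy : H.Adj x y) (hyz : H.Adj y z) (hxz : H.Adj x z) :
    Γ s(x, y) = Γ s(x, z) ∧ Γ s(x, y) = Γ s(y, z) := by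
  -- For a pair of adjacent vertices in the triangle, any monochromatic cut
  -- contains their edge and at least one of the two other triangle edges.
  have key : ∀ a b c : W, H.Adj a b → H.Adj b c → H.Adj a c →
      Γ s(a, b) = Γ s(a, c) ∨ Γ s(a, b) = Γ s(b, c) := by
    intro a b c hab hbc hac
    obtain ⟨i, F, _, hcol, hsep⟩ := hMD a b hab.ne
    have hab' : Γ s(a, b) = i := cut_color_of_adj hab hcol hsep
    by_contra hcon
    push_neg at hcon
    obtain ⟨h1, h2⟩ := hcon
    have hac' : s(a, c) ∉ F := fun h => h1 (by rw [hab', hcol _ h])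
    have hbc' : s(b, c) ∉ F := fun h => h2 (by rw [hab', hcol _ h])
    refine hsep ⟨SimpleGraph.Walk.cons (show ((H.deleteEdges F)).Adj a c by
        simp [hac, hac'])
      (SimpleGraph.Walk.cons (show ((H.deleteEdges F)).Adj c b by
        simp only [SimpleGraph.deleteEdges_adj]
        exact ⟨hbc.symm, by rwa [Sym2.eq_swap]⟩) SimpleGraph.Walk.nil)⟩
  have k1 := key x y z hxy hyz hxz
  have k2 := key y z x hyz hxz.symm hxy.symm
  have k3 := key x z y hxz hyz.symm hxy
  rw [Sym2.eq_swap (a := y) (b := x), Sym2.eq_swap (a := z) (b := x)] at k2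
  rw [Sym2.eq_swap (a := z) (b := y)] at k3
  constructor <;> rcases k1 with h|h <;> rcases k2 with h'|h' <;>
    rcases k3 with h''|h'' <;> omega

/-- Any MD-coloring of `joinOne G` is constant on the edge set. -/
lemma joinOne_md_constant {G : SimpleGraph V} (hG : G.Connected)
    {Γ : Sym2 (Option V) → ℕ} (hMD : IsMDColoring (joinOne G) Γ) :
    ∀ a : V, ∀ e ∈ (joinOne G).edgeSet, Γ e = Γ s(none, some a) := by
  -- spokes are all equal, by connectivity
  have spoke_step : ∀ a b : V, G.Adj a b →
      Γ s(none, some a) = Γ s(none, some b) :=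
    fun a b hab =>
      (triangle_eq hMD (joinOne_adj_none a) (joinOne_adj_some hab) (joinOne_adj_none b)).1
  have spoke : ∀ a b : V, Γ s(none, some a) = Γ s(none, some b) := by
    intro a b
    obtain ⟨w⟩ := hG.preconnected a b
    induction w with
    | nil => rfl
    | cons h _ ih => exact (spoke_step _ _ h).trans ih
  intro a e he
  induction e with
  | h x y =>
    rw [SimpleGraph.mem_edgeSet] at he
    match x, y with
    | none, none => exact absurd rfl he.ne
    | none, some b => exact spoke b a
    | some b, none => rw [Sym2.eq_swap]; exact spoke b a
    | some b, some c =>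
      have hbc : G.Adj b c := joinOne_adj_some_iff.mp he
      have := (triangle_eq hMD (joinOne_adj_none b) (joinOne_adj_some hbc)
        (joinOne_adj_none c)).2
      rw [← this]
      exact spoke b a

/-- For a connected graph `G`, `md(v ∨ G) = 1`. -/
theorem stmt_7 [Fintype V] (G : SimpleGraph V) (hG : G.Connected) :
    mdNumber (joinOne G) = 1 := by
  obtain ⟨a₀⟩ := hG.nonempty
  have hedge : s(none, some a₀) ∈ (joinOne G).edgeSet := joinOne_adj_none a₀
  have h1 : 1 ∈ {k | ∃ Γ : Sym2 (Option V) → ℕ,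
      IsMDColoring (joinOne G) Γ ∧ (Γ '' (joinOne G).edgeSet).ncard = k} := by
    refine ⟨fun _ => 0, ?_, ?_⟩
    · intro u v huv
      refine ⟨0, (joinOne G).edgeSet, subset_rfl, fun _ _ => rfl, ?_⟩
      rw [SimpleGraph.deleteEdges_edgeSet, sdiff_self]
      simp [SimpleGraph.reachable_bot, huv]
    · rw [Set.Nonempty.image_const ⟨_, hedge⟩ 0]
      simp
  have hb : ∀ k ∈ {k | ∃ Γ : Sym2 (Option V) → ℕ,
      IsMDColoring (joinOne G) Γ ∧ (Γ '' (joinOne G).edgeSet).ncard = k}, k ≤ 1 := by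
    rintro k ⟨Γ, hMD, rfl⟩
    have hsub : Γ '' (joinOne G).edgeSet ⊆ {Γ s(none, some a₀)} := by
      rintro x ⟨e, he, rfl⟩
      exact joinOne_md_constant hG hMD a₀ e he
    calc (Γ '' (joinOne G).edgeSet).ncard
        ≤ ({Γ s(none, some a₀)} : Set ℕ).ncard :=
          Set.ncard_le_ncard hsub (Set.finite_singleton _)
      _ = 1 := Set.ncard_singleton _
  exact le_antisymm (csSup_le ⟨1, h1⟩ hb) (le_csSup ⟨1, hb⟩ h1)
end

section
/- Let G be a connected graph and let v be a vertex of G that is neither a cut-vertex nor a pendent vertex (a vertex of degree one). If Γ is an MD-coloring of G using md(G) colors, then every color appearing on an edge of G appears on an edge of G − v; consequently md(G) ≤ md(G − v). -/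
open SimpleGraph

variable {V : Type*}

lemma reach_of_avoid (G : SimpleGraph V) (v : V)
    (hnotcut : (G.induce {v}ᶜ).Connected) (F : Set (Sym2 V))
    (hF : ∀ a b : V, a ≠ v → b ≠ v → s(a, b) ∉ F)
    {u w : V} (hu : u ≠ v) (hw : w ≠ v) :
    (G.deleteEdges F).Reachable u w := by
  have hu' : u ∈ ({v}ᶜ : Set V) := hu
  have hw' : w ∈ ({v}ᶜ : Set V) := hw
  have hr := hnotcut.preconnected ⟨u, hu'⟩ ⟨w, hw'⟩
  let f : G.induce {v}ᶜ →g G.deleteEdges F :=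
    ⟨Subtype.val, fun {a b} hab => (SimpleGraph.deleteEdges_adj ..).mpr
      ⟨hab, hF a.1 b.1 (Set.mem_compl_singleton_iff.mp a.2)
        (Set.mem_compl_singleton_iff.mp b.2)⟩⟩
  exact hr.map f

/-- If `v` is neither a cut-vertex nor a pendent vertex of a connected graph
`G` and `Γ` is an extremal MD-coloring of `G`, then every color of `Γ`
appears on an edge of `G - v`; consequently `md(G) ≤ md(G - v)`. -/
theorem stmt_8 [Fintype V] [DecidableEq V] (G : SimpleGraph V)
    [DecidableRel G.Adj] (hG : G.Connected) (v : V)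
    (hnotcut : (G.induce {v}ᶜ).Connected) (hnotpend : G.degree v ≠ 1)
    (Γ : Sym2 V → ℕ) (hΓ : IsMDColoring G Γ)
    (hext : (Γ '' G.edgeSet).ncard = mdNumber G) :
    Γ '' G.edgeSet ⊆
        (fun e => Γ (e.map Subtype.val)) '' (G.induce {v}ᶜ).edgeSet ∧
      mdNumber G ≤ mdNumber (G.induce {v}ᶜ) := by
  -- part 1
  have hsub : Γ '' G.edgeSet ⊆
      (fun e => Γ (e.map Subtype.val)) '' (G.induce {v}ᶜ).edgeSet := by
    rintro c ⟨e, he, rfl⟩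
    by_contra hc'
    -- every edge of color c touches v
    have P : ∀ a b : V, G.Adj a b → Γ s(a, b) = Γ e → a = v ∨ b = v := by
      intro a b hab hcol
      by_contra h
      push_neg at h
      obtain ⟨ha, hb⟩ := h
      apply hc'
      refine ⟨s((⟨a, ha⟩ : ({v}ᶜ : Set V)), ⟨b, hb⟩), ?_, ?_⟩
      · exact hab
      · simp only [Sym2.map_pair_eq]
        exact hcol
    have PF : ∀ (F : Set (Sym2 V)), F ⊆ G.edgeSet → (∀ f ∈ F, Γ f = Γ e) →
        ∀ a b : V, a ≠ v → b ≠ v → s(a, b) ∉ F := by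
      intro F hFsub hFcol a b ha hb hmem
      have hadj : G.Adj a b := (G.mem_edgeSet).mp (hFsub hmem)
      rcases P a b hadj (hFcol _ hmem) with h | h
      · exact ha h
      · exact hb h
    -- get a witness edge s(v, w) of color c
    obtain ⟨w, hvw, hwc⟩ : ∃ w, G.Adj v w ∧ Γ s(v, w) = Γ e := by
      induction e using Sym2.ind with
      | _ a b =>
        have hab : G.Adj a b := (G.mem_edgeSet).mp he
        rcases P a b hab rfl with rfl | rfl
        · exact ⟨b, hab, rfl⟩
        · exact ⟨a, hab.symm, by rw [Sym2.eq_swap]⟩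
    -- every edge at v has color c
    have allstar : ∀ u : V, G.Adj v u → Γ s(v, u) = Γ e := by
      intro u hvu
      by_contra huc
      obtain ⟨j, F, hFsub, hFcol, hFreach⟩ := hΓ v w hvw.ne
      have hvwF : s(v, w) ∈ F := by
        by_contra hn
        exact hFreach (SimpleGraph.Adj.reachable
          ((SimpleGraph.deleteEdges_adj).mpr ⟨hvw, hn⟩))
      have hj : j = Γ e := by rw [← hFcol _ hvwF, hwc]
      have hFcol' : ∀ f ∈ F, Γ f = Γ e := fun f hf => (hFcol f hf).trans hj
      have hvuF : s(v, u) ∉ F := fun hmem => huc (hFcol' _ hmem)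
      have h1 : (G.deleteEdges F).Reachable v u :=
        SimpleGraph.Adj.reachable ((SimpleGraph.deleteEdges_adj).mpr ⟨hvu, hvuF⟩)
      have h2 : (G.deleteEdges F).Reachable u w :=
        reach_of_avoid G v hnotcut F (PF F hFsub hFcol') hvu.ne' hvw.ne'
      exact hFreach (h1.trans h2)
    -- v has degree ≥ 2
    have hwmem : w ∈ G.neighborFinset v := by
      rw [SimpleGraph.mem_neighborFinset]; exact hvw
    have hdeg : 1 < (G.neighborFinset v).card := by
      rcases Nat.lt_or_ge (G.neighborFinset v).card 2 with h | h
      · interval_cases h' : (G.neighborFinset v).card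
        · exact absurd (Finset.card_eq_zero.mp h') (Finset.ne_empty_of_mem hwmem)
        · exact absurd h' (by rwa [SimpleGraph.degree] at hnotpend)
      · exact h
    obtain ⟨u, humem, huw⟩ := Finset.exists_mem_ne hdeg w
    have hvu : G.Adj v u := (SimpleGraph.mem_neighborFinset _ _ _).mp humem
    -- separate u and w: contradiction
    obtain ⟨j, F, hFsub, hFcol, hFreach⟩ := hΓ u w huw
    by_cases hjc : j = Γ e
    · have hFcol' : ∀ f ∈ F, Γ f = Γ e := fun f hf => (hFcol f hf).trans hjc
      exact hFreach (reach_of_avoid G v hnotcut F (PF F hFsub hFcol') hvu.ne' hvw.ne')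
    · have hvuF : s(v, u) ∉ F := fun hmem => hjc (((hFcol _ hmem).symm.trans (allstar u hvu)).symm ▸ rfl)
      have hvwF : s(v, w) ∉ F := fun hmem => hjc (((hFcol _ hmem).symm.trans (allstar w hvw)).symm ▸ rfl)
      have h1 : (G.deleteEdges F).Reachable u v :=
        SimpleGraph.Adj.reachable ((SimpleGraph.deleteEdges_adj).mpr ⟨hvu.symm, by rwa [Sym2.eq_swap]⟩)
      have h2 : (G.deleteEdges F).Reachable v w :=
        SimpleGraph.Adj.reachable ((SimpleGraph.deleteEdges_adj).mpr ⟨hvw, hvwF⟩)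
      exact hFreach (h1.trans h2)
  refine ⟨hsub, ?_⟩
  -- part 2
  set H := G.induce ({v}ᶜ : Set V) with hH
  set Γ₂ : Sym2 ({v}ᶜ : Set V) → ℕ := fun e => Γ (e.map Subtype.val) with hΓ₂
  have himg : Γ₂ '' H.edgeSet = Γ '' G.edgeSet := by
    apply Set.Subset.antisymm
    · rintro c ⟨e, he, rfl⟩
      induction e using Sym2.ind with
      | _ a b =>
        have hadj : G.Adj a.1 b.1 := he
        exact ⟨s(a.1, b.1), (G.mem_edgeSet).mpr hadj, by rw [hΓ₂]; simp [Sym2.map_pair_eq]⟩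
    · exact hsub
  have hMD : IsMDColoring H Γ₂ := by
    intro a b hab
    obtain ⟨j, F, hFsub, hFcol, hFreach⟩ := hΓ a.1 b.1 (Subtype.coe_injective.ne hab)
    refine ⟨j, {e ∈ H.edgeSet | e.map Subtype.val ∈ F}, fun e he => he.1,
      fun e he => hFcol _ he.2, ?_⟩
    intro hr
    apply hFreach
    let f : H.deleteEdges {e ∈ H.edgeSet | e.map Subtype.val ∈ F} →g G.deleteEdges F :=
      ⟨Subtype.val, fun {x y} hxy => (SimpleGraph.deleteEdges_adj ..).mpr
        ⟨((SimpleGraph.deleteEdges_adj ..).mp hxy).1, fun hmem =>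
          ((SimpleGraph.deleteEdges_adj ..).mp hxy).2
            ⟨(H.mem_edgeSet).mpr ((SimpleGraph.deleteEdges_adj ..).mp hxy).1,
             by simpa [Sym2.map_pair_eq] using hmem⟩⟩⟩
    exact hr.map f
  -- conclude
  rw [← hext]
  have hk : (Γ '' G.edgeSet).ncard ∈
      {k | ∃ Γ' : Sym2 ({v}ᶜ : Set V) → ℕ, IsMDColoring H Γ' ∧ (Γ' '' H.edgeSet).ncard = k} :=
    ⟨Γ₂, hMD, by rw [himg]⟩
  have hbdd : BddAbove {k | ∃ Γ' : Sym2 ({v}ᶜ : Set V) → ℕ,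
      IsMDColoring H Γ' ∧ (Γ' '' H.edgeSet).ncard = k} := by
    refine ⟨Nat.card (Sym2 ({v}ᶜ : Set V)), ?_⟩
    rintro k ⟨Γ', _, rfl⟩
    calc (Γ' '' H.edgeSet).ncard ≤ H.edgeSet.ncard := Set.ncard_image_le (Set.toFinite _)
      _ ≤ (Set.univ : Set (Sym2 ({v}ᶜ : Set V))).ncard :=
          Set.ncard_le_ncard (Set.subset_univ _) (Set.toFinite _)
      _ = Nat.card (Sym2 ({v}ᶜ : Set V)) := Set.ncard_univ _
  exact le_csSup hbdd hk
end

section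
/- If G is a 2-connected graph on n vertices, then md(G) ≤ ⌊n/2⌋. -/
open SimpleGraph

variable {V : Type*}

/-!
Grow a subgraph `H` of `G` by ears, i.e. paths of `G` that meet `H` exactly in their two
distinct ends, starting from a single edge and keeping `H` connected with
`2 · #colors(H) ≤ #vertices(H)`. An ear of length `ℓ` adds `ℓ - 1` vertices. Every edge of the
ear lies on a cycle of the enlarged graph, so the color of the edge, which must separate its ends,
occurs on at least two edges; hence each color new to `H` occurs at least twice on the ear. The
ends of the ear are separated by some color; if all ear edges had new colors, `H` or the ear
would join them avoiding that color. So some ear edge has an old color, and at most `ℓ - 1` ear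
edges carry the `≤ (ℓ - 1)/2` new colors. By 2-connectivity a maximal such `H` is all of `G`.
-/

theorem Set.two_mul_ncard_image_le {α β : Type*} {s : Set α} (hs : s.Finite) {f : α → β}
    (h : ∀ a ∈ s, ∃ b ∈ s, b ≠ a ∧ f b = f a) : 2 * (f '' s).ncard ≤ s.ncard := by
  classical
  obtain ⟨t, rfl⟩ := hs.exists_finset_coe
  rw [← Finset.coe_image, Set.ncard_coe_finset, Set.ncard_coe_finset]
  refine Finset.mul_card_image_le_card t 2 fun c hc => ?_
  obtain ⟨a, ha, rfl⟩ := Finset.mem_image.1 hc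
  obtain ⟨b, hb, hba, hfb⟩ := h a ha
  exact Finset.one_lt_card.2
    ⟨a, Finset.mem_filter.2 ⟨ha, rfl⟩, b, Finset.mem_filter.2 ⟨hb, hfb⟩, hba.symm⟩

namespace IsMDColoring

variable {G : SimpleGraph V} {Γ : Sym2 V → ℕ}

theorem exists_not_reachable (hΓ : IsMDColoring G Γ) {H : SimpleGraph V} (hH : H ≤ G)
    {u v : V} (huv : u ≠ v) : ∃ i, ¬ (H.deleteEdges (Γ ⁻¹' {i})).Reachable u v := by
  obtain ⟨i, F, -, hF, hnr⟩ := hΓ u v huv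
  refine ⟨i, fun h => hnr (h.mono ?_)⟩
  exact (deleteEdges_mono hH).trans (deleteEdges_anti fun e he => hF e he)

theorem exists_ne_color_eq_s10 (hΓ : IsMDColoring G Γ) {H : SimpleGraph V} (hH : H ≤ G) {a b : V}
    (hab : H.Adj a b) (hr : (H.deleteEdges {s(a, b)}).Reachable a b) :
    ∃ e ∈ H.edgeSet, e ≠ s(a, b) ∧ Γ e = Γ s(a, b) := by
  obtain ⟨i, hi⟩ := hΓ.exists_not_reachable hH hab.ne
  have hcolor : Γ s(a, b) = i := by
    by_contra h
    exact hi (Adj.reachable (by simp [hab, h]))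
  by_contra! hnone
  refine hi (hr.mono fun x y hxy => ?_)
  rw [deleteEdges_adj] at hxy ⊢
  exact ⟨hxy.1, fun h => hnone _ hxy.1 hxy.2 (hcolor ▸ h)⟩

end IsMDColoring

namespace SimpleGraph

theorem Walk.IsTrail.reachable_deleteEdges_of_mem_support {K : SimpleGraph V} {u w x : V}
    {p : K.Walk u w} (hp : p.IsTrail) (e : Sym2 V) (huw : (K.deleteEdges {e}).Reachable u w)
    (hx : x ∈ p.support) : (K.deleteEdges {e}).Reachable u x := by
  classical
  have hsplit : (p.takeUntil x hx).edges ++ (p.dropUntil x hx).edges = p.edges := by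
    rw [← Walk.edges_append, p.take_spec hx]
  have hdisj := List.disjoint_of_nodup_append (hsplit ▸ hp.edges_nodup)
  by_cases he : e ∈ (p.takeUntil x hx).edges
  · exact huw.trans ((p.dropUntil x hx).toDeleteEdge e (hdisj he)).reachable.symm
  · exact ((p.takeUntil x hx).toDeleteEdge e he).reachable

theorem Walk.IsPath.ncard_support {G : SimpleGraph V} {u w : V} {p : G.Walk u w}
    (hp : p.IsPath) : {x | x ∈ p.support}.ncard = p.length + 1 := by
  classical
  rw [← List.coe_toFinset, Set.ncard_coe_finset, List.toFinset_card_of_nodup hp.support_nodup,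
    Walk.length_support]

theorem Walk.IsTrail.ncard_edgeSet {G : SimpleGraph V} {u w : V} {p : G.Walk u w}
    (hp : p.IsTrail) : p.edgeSet.ncard = p.length := by
  classical
  rw [Walk.edgeSet, ← List.coe_toFinset, Set.ncard_coe_finset,
    List.toFinset_card_of_nodup hp.edges_nodup, Walk.length_edges]

theorem Walk.exists_walk_to_first_mem (S : Set V) {G : SimpleGraph V} :
    ∀ {y t : V} (q : G.Walk y t), t ∈ S →
      ∃ z ∈ S, ∃ r : G.Walk y z, r.support ⊆ q.support ∧ ∀ v ∈ r.support, v ∈ S → v = z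
  | _, _, .nil, ht => ⟨_, ht, .nil, by simp, by simp⟩
  | y, _, .cons h q, ht => by
    by_cases hy : y ∈ S
    · exact ⟨y, hy, .nil, by simp, by simp⟩
    obtain ⟨z, hz, r, hrq, hrS⟩ := exists_walk_to_first_mem S q ht
    refine ⟨z, hz, .cons h r, ?_, ?_⟩
    · simpa using List.cons_subset_cons y hrq
    · intro v hv
      rcases List.mem_cons.1 (Walk.support_cons h r ▸ hv) with rfl | hv
      · exact fun h => absurd h hy
      · exact hrS v hv

theorem exists_walk_notMem_support {G : SimpleGraph V}
    (h2conn : ∀ v : V, (G.induce {v}ᶜ).Connected) {a b x : V} (ha : a ≠ x) (hb : b ≠ x) :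
    ∃ q : G.Walk a b, x ∉ q.support := by
  obtain ⟨q⟩ := (h2conn x).preconnected ⟨a, ha⟩ ⟨b, hb⟩
  let q' : G.Walk a b := q.map (Embedding.induce _).toHom
  have hq' : q'.support = q.support.map Subtype.val := Walk.support_map _ _
  refine ⟨q', ?_⟩
  simp [hq']

theorem exists_walk_first_mem_ne {G : SimpleGraph V}
    (h2conn : ∀ v : V, (G.induce {v}ᶜ).Connected) {S : Set V} {y a t : V} (hy : y ∉ S)
    (ha : a ∈ S) (ht : t ∈ S) (hta : t ≠ a) :
    ∃ z ∈ S, z ≠ a ∧ ∃ q : G.Walk y z, ∀ v ∈ q.support, v ∈ S → v = z := by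
  obtain ⟨q, hq⟩ := exists_walk_notMem_support (a := y) h2conn (by rintro rfl; exact hy ha) hta
  obtain ⟨z, hz, r, hrq, hr⟩ := q.exists_walk_to_first_mem S ht
  exact ⟨z, hz, fun h => hq (hrq (h ▸ r.end_mem_support)), r, hr⟩

theorem exists_adj_of_three_le_card [Fintype V] {G : SimpleGraph V}
    (h3 : 3 ≤ Fintype.card V) (h2conn : ∀ v : V, (G.induce {v}ᶜ).Connected) :
    ∃ a b, G.Adj a b := by
  classical
  obtain ⟨a, b, hab⟩ := Fintype.exists_pair_of_one_lt_card (α := V) (by omega)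
  obtain ⟨x, -, hx⟩ := Finset.exists_mem_notMem_of_card_lt_card (s := {a, b}) (t := .univ)
    ((Finset.card_le_two).trans_lt (by rwa [Finset.card_univ]))
  obtain ⟨q, -⟩ := exists_walk_notMem_support h2conn (a := a) (b := b) (x := x)
    (by rintro rfl; simp at hx) (by rintro rfl; simp at hx)
  cases q with
  | nil => exact absurd rfl hab
  | cons h _ => exact ⟨_, _, h⟩

namespace Subgraph

variable {G : SimpleGraph V} {Γ : Sym2 V → ℕ}

structure ColorBounded (Γ : Sym2 V → ℕ) (H : G.Subgraph) : Prop where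
  nontrivial : H.verts.Nontrivial
  reachable : ∀ u ∈ H.verts, ∀ v ∈ H.verts, H.spanningCoe.Reachable u v
  two_mul_ncard_colors_le : 2 * (Γ '' H.edgeSet).ncard ≤ H.verts.ncard

structure IsEar (H : G.Subgraph) {u w : V} (p : G.Walk u w) : Prop where
  isPath : p.IsPath
  ne : u ≠ w
  start_mem : u ∈ H.verts
  end_mem : w ∈ H.verts
  eq_or_eq_of_mem_verts : ∀ x ∈ p.support, x ∈ H.verts → x = u ∨ x = w
  edges_notMem : ∀ e ∈ p.edges, e ∉ H.edgeSet

theorem mem_edgeSet_spanningCoe_of_toSubgraph_le {H : G.Subgraph} {u w : V} {p : G.Walk u w}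
    (h : p.toSubgraph ≤ H) : ∀ e ∈ p.edges, e ∈ H.spanningCoe.edgeSet := fun e he => by
  rw [edgeSet_spanningCoe]
  exact edgeSet_mono h ((Walk.mem_edges_toSubgraph p).2 he)

theorem notMem_edgeSet_of_mem_edges {H : G.Subgraph} {y z : V}
    {q : G.Walk y z} (hq : ∀ v ∈ q.support, v ∈ H.verts → v = z) {e : Sym2 V}
    (he : e ∈ q.edges) : e ∉ H.edgeSet := by
  induction e using Sym2.ind with
  | _ a b =>
  intro hab
  have ha := hq a (q.fst_mem_support_of_mem_edges he) (H.edge_vert hab)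
  have hb := hq b (q.snd_mem_support_of_mem_edges he) (H.edge_vert (H.adj_symm hab))
  exact (q.adj_of_mem_edges he).ne (ha.trans hb.symm)

theorem colorBounded_subgraphOfAdj (Γ : Sym2 V → ℕ) {a b : V} (hab : G.Adj a b) :
    (G.subgraphOfAdj hab).ColorBounded Γ where
  nontrivial := by
    rw [subgraphOfAdj_verts]
    exact Set.nontrivial_pair hab.ne
  reachable := by
    have hadj : (G.subgraphOfAdj hab).spanningCoe.Adj a b := by simp [hab.ne]
    simp only [subgraphOfAdj_verts, Set.mem_insert_iff, Set.mem_singleton_iff]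
    rintro u (rfl | rfl) v (rfl | rfl)
    exacts [.rfl, hadj.reachable, hadj.reachable.symm, .rfl]
  two_mul_ncard_colors_le := by
    rw [edgeSet_subgraphOfAdj, Set.image_singleton, Set.ncard_singleton, subgraphOfAdj_verts,
      Set.ncard_pair hab.ne]

theorem isEar_toWalk {H : G.Subgraph} {a b : V} (hab : G.Adj a b) (ha : a ∈ H.verts)
    (hb : b ∈ H.verts) (hnew : s(a, b) ∉ H.edgeSet) : H.IsEar hab.toWalk where
  isPath := hab.isPath_toWalk
  ne := hab.ne
  start_mem := ha
  end_mem := hb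
  eq_or_eq_of_mem_verts := by simp
  edges_notMem := by simpa using hnew

namespace IsEar

variable {H : G.Subgraph} {u w : V} {p : G.Walk u w}

theorem lt_sup (hp : H.IsEar p) : H < H ⊔ p.toSubgraph := by
  refine lt_of_le_of_ne le_sup_left fun h => ?_
  cases p with
  | nil => exact hp.ne rfl
  | cons hadj q =>
    apply hp.edges_notMem _ (List.mem_cons_self ..)
    rw [h]
    exact edgeSet_mono le_sup_right ((Walk.mem_edges_toSubgraph _).2 (List.mem_cons_self ..))

theorem reachable_deleteEdges (hp : H.IsEar p) (huw : H.spanningCoe.Reachable u w) {a b : V}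
    (hab : s(a, b) ∈ p.edges) :
    ((H ⊔ p.toSubgraph).spanningCoe.deleteEdges {s(a, b)}).Reachable a b := by
  set K := (H ⊔ p.toSubgraph).spanningCoe
  have hpK := mem_edgeSet_spanningCoe_of_toSubgraph_le (le_sup_right : p.toSubgraph ≤ H ⊔ _)
  have htrail : (p.transfer K hpK).IsTrail := (hp.isPath.transfer hpK).isTrail
  have huwK : (K.deleteEdges {s(a, b)}).Reachable u w := by
    refine huw.mono fun x y hxy => ?_
    rw [SimpleGraph.deleteEdges_adj, Set.mem_singleton_iff]
    refine ⟨spanningCoe_le_of_le le_sup_left hxy, fun h => hp.edges_notMem _ hab ?_⟩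
    rw [← h]
    exact hxy
  have hreach : ∀ x ∈ p.support, (K.deleteEdges {s(a, b)}).Reachable u x := fun x hx =>
    htrail.reachable_deleteEdges_of_mem_support _ huwK (by rwa [Walk.support_transfer])
  exact (hreach a (p.fst_mem_support_of_mem_edges hab)).symm.trans
    (hreach b (p.snd_mem_support_of_mem_edges hab))

theorem exists_mem_edges_color_mem (hΓ : IsMDColoring G Γ) (hp : H.IsEar p)
    (huw : H.spanningCoe.Reachable u w) : ∃ e ∈ p.edges, Γ e ∈ Γ '' H.edgeSet := by
  by_contra! hnew
  set K := (H ⊔ p.toSubgraph).spanningCoe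
  obtain ⟨i, hi⟩ := hΓ.exists_not_reachable (spanningCoe_le _) hp.ne
  by_cases hiH : i ∈ Γ '' H.edgeSet
  · have hpK : ∀ e ∈ p.edges, e ∈ (K.deleteEdges (Γ ⁻¹' {i})).edgeSet := fun e he => by
      rw [SimpleGraph.edgeSet_deleteEdges]
      exact ⟨mem_edgeSet_spanningCoe_of_toSubgraph_le le_sup_right e he,
        fun h => hnew e he (by rw [show Γ e = i from h]; exact hiH)⟩
    exact hi (p.transfer _ hpK).reachable
  · refine hi (huw.mono fun x y hxy => ?_)
    rw [SimpleGraph.deleteEdges_adj]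
    exact ⟨spanningCoe_le_of_le le_sup_left hxy, fun h => hiH ⟨_, hxy, h⟩⟩

theorem two_mul_ncard_newColors_le (hΓ : IsMDColoring G Γ) (hp : H.IsEar p)
    (huw : H.spanningCoe.Reachable u w) :
    2 * (Γ '' {e | e ∈ p.edges ∧ Γ e ∉ Γ '' H.edgeSet}).ncard ≤
      {e | e ∈ p.edges ∧ Γ e ∉ Γ '' H.edgeSet}.ncard := by
  refine Set.two_mul_ncard_image_le ((List.finite_toSet p.edges).subset fun e he => he.1) ?_
  rintro e ⟨he, hnew⟩
  induction e using Sym2.ind with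
  | _ a b =>
  obtain ⟨e', he', hne, hcol⟩ := hΓ.exists_ne_color_eq_s10 (spanningCoe_le (H ⊔ p.toSubgraph))
    ((SimpleGraph.mem_edgeSet _).1 (mem_edgeSet_spanningCoe_of_toSubgraph_le le_sup_right _ he))
    (hp.reachable_deleteEdges huw he)
  rw [edgeSet_spanningCoe, edgeSet_sup, Walk.edgeSet_toSubgraph] at he'
  rcases he' with he' | he'
  · exact absurd ⟨e', he', hcol⟩ hnew
  · exact ⟨e', ⟨he', hcol ▸ hnew⟩, hne, hcol⟩

theorem ncard_verts_sup_add_one [Finite V] (hp : H.IsEar p) :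
    (H ⊔ p.toSubgraph).verts.ncard + 1 = H.verts.ncard + p.length := by
  have hinter : H.verts ∩ {x | x ∈ p.support} = {u, w} := by
    ext x
    simp only [Set.mem_inter_iff, Set.mem_ofPred_eq, Set.mem_insert_iff, Set.mem_singleton_iff]
    refine ⟨fun ⟨hx, hxp⟩ => hp.eq_or_eq_of_mem_verts x hxp hx, ?_⟩
    rintro (rfl | rfl)
    exacts [⟨hp.start_mem, p.start_mem_support⟩, ⟨hp.end_mem, p.end_mem_support⟩]
  have := Set.ncard_union_add_ncard_inter H.verts {x | x ∈ p.support}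
  rw [hinter, Set.ncard_pair hp.ne, hp.isPath.ncard_support] at this
  rw [verts_sup, Walk.verts_toSubgraph]
  omega

end IsEar

namespace ColorBounded

variable {H : G.Subgraph}

theorem sup [Finite V] (hΓ : IsMDColoring G Γ) (hH : H.ColorBounded Γ) {u w : V}
    {p : G.Walk u w} (hp : H.IsEar p) : (H ⊔ p.toSubgraph).ColorBounded Γ where
  nontrivial := hH.nontrivial.mono (by rw [verts_sup]; exact Set.subset_union_left)
  reachable := by
    classical
    suffices ∀ x ∈ (H ⊔ p.toSubgraph).verts, (H ⊔ p.toSubgraph).spanningCoe.Reachable u x from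
      fun x hx y hy => (this x hx).symm.trans (this y hy)
    rintro x (hx | hx)
    · exact (hH.reachable u hp.start_mem x hx).mono (spanningCoe_le_of_le le_sup_left)
    · let pK := p.transfer _ (mem_edgeSet_spanningCoe_of_toSubgraph_le
        (le_sup_right : p.toSubgraph ≤ H ⊔ _))
      have hx : x ∈ pK.support := by rwa [Walk.support_transfer, ← Walk.mem_verts_toSubgraph]
      exact (pK.takeUntil x hx).reachable
  two_mul_ncard_colors_le := by
    set A := {e | e ∈ p.edges ∧ Γ e ∉ Γ '' H.edgeSet}
    have huw := hH.reachable u hp.start_mem w hp.end_mem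
    have himage : Γ '' (H ⊔ p.toSubgraph).edgeSet ⊆ Γ '' H.edgeSet ∪ Γ '' A := by
      rintro _ ⟨e, he, rfl⟩
      by_cases hc : Γ e ∈ Γ '' H.edgeSet
      · exact Or.inl hc
      rw [edgeSet_sup, Walk.edgeSet_toSubgraph] at he
      rcases he with he | he
      · exact absurd (Set.mem_image_of_mem Γ he) hc
      · exact Or.inr ⟨e, ⟨he, hc⟩, rfl⟩
    have hA : A.ncard < p.length := by
      obtain ⟨e, he, hold⟩ := hp.exists_mem_edges_color_mem hΓ huw
      rw [← hp.isPath.isTrail.ncard_edgeSet]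
      exact Set.ncard_lt_ncard ⟨fun e he => he.1, fun h => (h he).2 hold⟩ (List.finite_toSet _)
    have hcolors := (Set.ncard_le_ncard himage).trans (Set.ncard_union_le _ _)
    have hnew : 2 * (Γ '' A).ncard ≤ A.ncard := hp.two_mul_ncard_newColors_le hΓ huw
    have hverts := hp.ncard_verts_sup_add_one
    have hold := hH.two_mul_ncard_colors_le
    omega

theorem exists_isEar_of_notMem (h2conn : ∀ v : V, (G.induce {v}ᶜ).Connected)
    (hH : H.ColorBounded Γ) {y : V} (hy : y ∉ H.verts) : ∃ u w, ∃ p : G.Walk u w, H.IsEar p := by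
  classical
  -- Two walks from `y`, each stopped at its first vertex in `H`, the second avoiding the end `z₁`
  -- of the first, combine into an ear from `z₁` to `z₂`.
  obtain ⟨s₁, hs₁, s₂, hs₂, hs⟩ := hH.nontrivial
  obtain ⟨z₁, hz₁, -, q₁, hq₁⟩ := exists_walk_first_mem_ne h2conn hy hs₁ hs₂ (Ne.symm hs)
  obtain ⟨t, ht, htz⟩ := hH.nontrivial.exists_ne z₁
  obtain ⟨z₂, hz₂, hz, q₂, hq₂⟩ := exists_walk_first_mem_ne h2conn hy hz₁ ht htz
  let q := q₁.reverse.append q₂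
  refine ⟨z₁, z₂, q.bypass, q.bypass_isPath, hz.symm, hz₁, hz₂, fun v hv hvH => ?_, fun e he => ?_⟩
  · rcases (Walk.mem_support_append_iff _ _).1 (q.support_bypass_subset_support hv) with hv | hv
    · exact Or.inl (hq₁ v (by simpa using hv) hvH)
    · exact Or.inr (hq₂ v hv hvH)
  · rcases List.mem_append.1 (Walk.edges_append _ _ ▸ q.edges_bypass_subset_edges he) with he | he
    · exact notMem_edgeSet_of_mem_edges hq₁ (by simpa using he)
    · exact notMem_edgeSet_of_mem_edges hq₂ he

theorem eq_top_of_maximal [Finite V] (hΓ : IsMDColoring G Γ)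
    (h2conn : ∀ v : V, (G.induce {v}ᶜ).Connected) (hmax : Maximal (ColorBounded Γ) H) :
    H = ⊤ := by
  have hnoEar : ∀ {u w : V} (p : G.Walk u w), ¬ H.IsEar p := fun _ hp =>
    hmax.not_gt (hmax.prop.sup hΓ hp) hp.lt_sup
  have hverts : ∀ y, y ∈ H.verts := fun y => by
    by_contra hy
    obtain ⟨u, w, p, hp⟩ := hmax.prop.exists_isEar_of_notMem h2conn hy
    exact hnoEar p hp
  refine eq_top_iff.2 ⟨fun y _ => hverts y, fun a b hab => ?_⟩
  by_contra hnew
  exact hnoEar _ (isEar_toWalk hab (hverts a) (hverts b) hnew)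

end ColorBounded

end Subgraph

end SimpleGraph

/-- A 2-connected graph on `n` vertices has `md(G) ≤ ⌊n / 2⌋`. -/
theorem stmt_10 [Fintype V] (G : SimpleGraph V)
    (h3 : 3 ≤ Fintype.card V)
    (h2conn : ∀ v : V, (G.induce {v}ᶜ).Connected) :
    mdNumber G ≤ Fintype.card V / 2 := by
  refine csSup_le' ?_
  rintro _ ⟨Γ, hΓ, rfl⟩
  obtain ⟨a, b, hab⟩ := exists_adj_of_three_le_card h3 h2conn
  obtain ⟨H, hH⟩ := (Set.toFinite {H : G.Subgraph | H.ColorBounded Γ}).exists_maximal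
    ⟨_, Subgraph.colorBounded_subgraphOfAdj Γ hab⟩
  have hbound := hH.prop.two_mul_ncard_colors_le
  rw [Subgraph.ColorBounded.eq_top_of_maximal hΓ h2conn hH, Subgraph.edgeSet_top,
    Subgraph.verts_top, Set.ncard_univ, Nat.card_eq_fintype_card] at hbound
  omega
end

section
/- Let G be a connected graph, Γ an MD-coloring of G using md(G) colors, and u, v nonadjacent vertices such that exactly one color t separates u and v (i.e., C_Γ(u,v) = {t}). Let G′ = G + uv and extend Γ to Γ′ by coloring the new edge uv with color t. Then Γ′ is an MD-coloring of G′, and md(G′) = md(G). -/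
open SimpleGraph

variable {V : Type*}

/-! Let `Γ'` be `Γ` extended by `Γ' uv = t`. A monochromatic cut `F` of `G` separating `x` and `y`
either leaves `u` and `v` connected, and then still separates `x` and `y` in `G + uv`, or it
separates `u` and `v`, so its color is `t` and `F ∪ {uv}` is a cut of `G + uv` of color `t`.
Conversely, an MD-coloring of `G + uv` is one of `G`, and since `G` is connected, the cut
separating `u` and `v` contains an edge of `G` with the color of `uv`, so no color is lost:
`md(G + uv) ≤ md(G)`, while `Γ'` uses the `md(G)` colors of `Γ`. -/

variable {G H : SimpleGraph V} {Γ : Sym2 V → ℕ} {i t : ℕ} {u v x y : V}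

lemma SimpleGraph.Reachable.of_sup_edge (huv : G.Reachable u v)
    (h : (G ⊔ edge u v).Reachable x y) : G.Reachable x y := by
  rw [reachable_iff_reflTransGen] at h ⊢
  refine Relation.ReflTransGen.lift' id (fun a b hab ↦ (reachable_iff_reflTransGen a b).1 ?_) _ _ h
  rcases hab with hab | hab
  · exact hab.reachable
  · obtain ⟨⟨rfl, rfl⟩ | ⟨rfl, rfl⟩, -⟩ := (edge_adj ..).1 hab
    exacts [huv, huv.symm]

lemma SimpleGraph.edgeSet_sup_edge (huv : u ≠ v) :
    (G ⊔ edge u v).edgeSet = insert s(u, v) G.edgeSet := by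
  rw [edgeSet_sup, edgeSet_edge_of_ne huv, Set.union_singleton]

lemma separatesColor.anti (hHG : H ≤ G) (h : separatesColor G Γ i x y) :
    separatesColor H Γ i x y := by
  obtain ⟨F, -, hF, hxy⟩ := h
  refine ⟨F ∩ H.edgeSet, Set.inter_subset_right, fun e he ↦ hF e he.1, fun hr ↦ hxy (hr.mono ?_)⟩
  intro a b hab
  rw [deleteEdges_adj] at hab ⊢
  exact ⟨hHG hab.1, fun haF ↦ hab.2 ⟨haF, hab.1⟩⟩

lemma IsMDColoring.anti (hHG : H ≤ G) (hΓ : IsMDColoring G Γ) : IsMDColoring H Γ :=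
  fun x y hxy ↦ (hΓ x y hxy).imp fun _ ↦ separatesColor.anti hHG

lemma separatesColor.apply_eq_of_adj (hxy : G.Adj x y) (h : separatesColor G Γ i x y) :
    Γ s(x, y) = i := by
  obtain ⟨F, -, hF, hnr⟩ := h
  by_contra hne
  exact hnr (deleteEdges_adj.2 ⟨hxy, fun hxyF ↦ hne (hF _ hxyF)⟩).reachable

lemma separatesColor.exists_mem_edgeSet (hH : H.Connected) (hHG : H ≤ G)
    (h : separatesColor G Γ i x y) : ∃ e ∈ H.edgeSet, Γ e = i := by
  obtain ⟨F, -, hF, hnr⟩ := h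
  by_contra! hcol
  refine hnr ((hH.preconnected x y).mono fun a b hab ↦ deleteEdges_adj.2 ⟨hHG hab, fun habF ↦ ?_⟩)
  exact hcol _ hab (hF _ habF)

lemma IsMDColoring.image_edgeSet_sup_edge (hG : G.Connected) (huv : u ≠ v)
    (hΓ : IsMDColoring (G ⊔ edge u v) Γ) : Γ '' (G ⊔ edge u v).edgeSet = Γ '' G.edgeSet := by
  refine (Set.image_mono (edgeSet_mono le_sup_left)).antisymm' ?_
  rintro _ ⟨e, he, rfl⟩
  rw [edgeSet_sup_edge huv] at he
  rcases he with rfl | he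
  · obtain ⟨i, hi⟩ := hΓ u v huv
    obtain ⟨f, hf, hfi⟩ := hi.exists_mem_edgeSet hG le_sup_left
    rw [hi.apply_eq_of_adj (Or.inr ((edge_adj ..).2 ⟨Or.inl ⟨rfl, rfl⟩, huv⟩))]
    exact ⟨f, hf, hfi⟩
  · exact Set.mem_image_of_mem Γ he

lemma IsMDColoring.sup_edge [DecidableEq V] (hΓ : IsMDColoring G Γ) (hnadj : ¬G.Adj u v)
    (ht : ∀ i, separatesColor G Γ i u v → i = t) :
    IsMDColoring (G ⊔ edge u v) (fun e ↦ if e = s(u, v) then t else Γ e) := by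
  intro x y hxy
  obtain ⟨i, F, hFG, hF, hnr⟩ := hΓ x y hxy
  have hFG' : F ⊆ (G ⊔ edge u v).edgeSet := hFG.trans (edgeSet_mono le_sup_left)
  have hF' (e) (he : e ∈ F) : (if e = s(u, v) then t else Γ e) = i :=
    (if_neg (ne_of_mem_of_not_mem (hFG he) (show s(u, v) ∉ G.edgeSet from hnadj))).trans
      (hF e he)
  by_cases huv : (G.deleteEdges F).Reachable u v
  · refine ⟨i, F, hFG', hF', fun hr ↦ hnr (huv.of_sup_edge (hr.mono ?_))⟩
    rw [deleteEdges_sup]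
    exact sup_le_sup_left (deleteEdges_le _) _
  · obtain rfl := ht i ⟨F, hFG, hF, huv⟩
    have hne : u ≠ v := by rintro rfl; exact huv .rfl
    refine ⟨i, F ∪ {s(u, v)}, Set.union_subset hFG' ?_, ?_, fun hr ↦ hnr (hr.mono ?_)⟩
    · rw [edgeSet_sup_edge hne, Set.singleton_subset_iff]
      exact Set.mem_insert _ _
    · rintro e (he | rfl)
      exacts [hF' e he, if_pos rfl]
    · rw [deleteEdges_sup, deleteEdges_edge (Or.inr rfl), sup_bot_eq]
      exact deleteEdges_anti Set.subset_union_left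

lemma ncard_image_le_mdNumber [Finite V] (hΓ : IsMDColoring G Γ) :
    (Γ '' G.edgeSet).ncard ≤ mdNumber G := by
  refine le_csSup ⟨Nat.card (Sym2 V), ?_⟩ ⟨Γ, hΓ, rfl⟩
  rintro _ ⟨Δ, -, rfl⟩
  exact (Set.ncard_image_le (Set.toFinite _)).trans (Set.ncard_le_card _)

lemma mdNumber_le_s13 {n : ℕ} (h : ∀ Γ, IsMDColoring G Γ → (Γ '' G.edgeSet).ncard ≤ n) :
    mdNumber G ≤ n :=
  csSup_le' <| by rintro _ ⟨Γ, hΓ, rfl⟩; exact h Γ hΓ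

lemma mdNumber_sup_edge_le [Finite V] (hG : G.Connected) (huv : u ≠ v) :
    mdNumber (G ⊔ edge u v) ≤ mdNumber G :=
  mdNumber_le_s13 fun _ hΔ ↦
    hΔ.image_edgeSet_sup_edge hG huv ▸ ncard_image_le_mdNumber (hΔ.anti le_sup_left)

/-- If `Γ` is an extremal MD-coloring of `G` and `u`, `v` are nonadjacent
vertices separated by exactly one color `t`, then coloring the extra edge
`uv` with color `t` yields an MD-coloring of `G + uv`, and
`md(G + uv) = md(G)`. -/
theorem stmt_13 [Fintype V] [DecidableEq V] (G : SimpleGraph V) (hG : G.Connected)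
    (Γ : Sym2 V → ℕ) (hΓ : IsMDColoring G Γ)
    (hext : (Γ '' G.edgeSet).ncard = mdNumber G)
    (u v : V) (huv : u ≠ v) (hnadj : ¬ G.Adj u v) (t : ℕ)
    (hsep : {i : ℕ | separatesColor G Γ i u v} = {t}) :
    IsMDColoring (G ⊔ SimpleGraph.fromEdgeSet {s(u, v)})
        (fun e => if e = s(u, v) then t else Γ e) ∧
      mdNumber (G ⊔ SimpleGraph.fromEdgeSet {s(u, v)}) = mdNumber G := by
  have hMD : IsMDColoring (G ⊔ edge u v) (fun e ↦ if e = s(u, v) then t else Γ e) :=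
    hΓ.sup_edge hnadj fun i hi ↦ hsep.subset hi
  have himage : (fun e ↦ if e = s(u, v) then t else Γ e) '' G.edgeSet = Γ '' G.edgeSet :=
    Set.image_congr fun e he ↦
      if_neg (ne_of_mem_of_not_mem he (show s(u, v) ∉ G.edgeSet from hnadj))
  refine ⟨hMD, (mdNumber_sup_edge_le hG huv).antisymm ?_⟩
  calc mdNumber G = (Γ '' G.edgeSet).ncard := hext.symm
    _ = ((fun e ↦ if e = s(u, v) then t else Γ e) '' (G ⊔ edge u v).edgeSet).ncard := by
      rw [hMD.image_edgeSet_sup_edge hG huv, himage]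
    _ ≤ mdNumber (G ⊔ edge u v) := ncard_image_le_mdNumber hMD
end

section
/- If G is a 2-connected graph with diameter at most 2, then md(G) ≤ 2. -/
open SimpleGraph

variable {V : Type*}

namespace MDaux

/-! ### Boolean cube lemmas -/

abbrev B3 := Bool × Bool × Bool

def bf1 (a : B3) : B3 := (!a.1, a.2.1, a.2.2)
def bf2 (a : B3) : B3 := (a.1, !a.2.1, a.2.2)
def bf3 (a : B3) : B3 := (a.1, a.2.1, !a.2.2)

/-- Hamming distance at most 1. -/
def Near (a b : B3) : Prop :=
  ¬(a.1 ≠ b.1 ∧ a.2.1 ≠ b.2.1) ∧ ¬(a.1 ≠ b.1 ∧ a.2.2 ≠ b.2.2) ∧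
    ¬(a.2.1 ≠ b.2.1 ∧ a.2.2 ≠ b.2.2)

instance (a b : B3) : Decidable (Near a b) := by unfold Near; infer_instance

set_option maxHeartbeats 4000000 in
set_option maxRecDepth 10000 in
set_option synthInstance.maxSize 4000 in
set_option synthInstance.maxHeartbeats 4000000 in
lemma bool_claw : ∀ g : B3 → Bool,
    (∀ a b, g a = true → g b = true → a.1 ≠ b.1 → a.2.1 ≠ b.2.1 → a.2.2 ≠ b.2.2 → False) →
    (∃ a, g a = true ∧ g (bf1 a) = true) →
    (∃ a, g a = true ∧ g (bf2 a) = true) →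
    (∃ a, g a = true ∧ g (bf3 a) = true) →
    ∃ m, g m = true ∧ g (bf1 m) = true ∧ g (bf2 m) = true ∧ g (bf3 m) = true ∧
      ∀ a, g a = true → a = m ∨ a = bf1 m ∨ a = bf2 m ∨ a = bf3 m := by decide

set_option maxRecDepth 10000 in
set_option synthInstance.maxSize 4000 in
set_option synthInstance.maxHeartbeats 4000000 in
lemma bool_anti_mid : ∀ a b w : B3, a.1 ≠ b.1 → a.2.1 ≠ b.2.1 → a.2.2 ≠ b.2.2 →
    Near a w → Near w b → False := by decide

set_option maxRecDepth 10000 in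
set_option synthInstance.maxSize 4000 in
set_option synthInstance.maxHeartbeats 4000000 in
lemma bool_leaf1 : ∀ m a : B3, (a = m ∨ a = bf1 m ∨ a = bf2 m ∨ a = bf3 m) →
    Near (bf1 m) a → a = bf1 m ∨ a = m := by decide

set_option maxRecDepth 10000 in
set_option synthInstance.maxSize 4000 in
set_option synthInstance.maxHeartbeats 4000000 in
lemma bool_leaf2 : ∀ m a : B3, (a = m ∨ a = bf1 m ∨ a = bf2 m ∨ a = bf3 m) →
    Near (bf2 m) a → a = bf2 m ∨ a = m := by decide

set_option maxRecDepth 10000 in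
set_option synthInstance.maxSize 4000 in
set_option synthInstance.maxHeartbeats 4000000 in
lemma bool_leaf3 : ∀ m a : B3, (a = m ∨ a = bf1 m ∨ a = bf2 m ∨ a = bf3 m) →
    Near (bf3 m) a → a = bf3 m ∨ a = m := by decide

set_option maxRecDepth 10000 in
set_option synthInstance.maxSize 4000 in
set_option synthInstance.maxHeartbeats 4000000 in
lemma bool_bf_ne : ∀ m : B3, bf1 m ≠ m ∧ bf2 m ≠ m ∧ bf3 m ≠ m ∧
    bf1 m ≠ bf2 m ∧ bf1 m ≠ bf3 m ∧ bf2 m ≠ bf3 m := by decide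

lemma bnot_of_ne : ∀ x y : Bool, x ≠ y → y = !x := by decide

/-! ### Graph auxiliary notions -/

variable (G : SimpleGraph V) (Γ : Sym2 V → ℕ)

/-- `S` has a monochromatic boundary of color `c`. -/
def MBd (S : Set V) (c : ℕ) : Prop :=
  ∀ ⦃x y : V⦄, G.Adj x y → x ∈ S → y ∉ S → Γ s(x, y) = c

lemma mbd_compl {S : Set V} {c : ℕ} (h : MBd G Γ S c) : MBd G Γ Sᶜ c := by
  intro x y hxy hx hy
  rw [Sym2.eq_swap]
  exact h hxy.symm (by simpa using hy) (by simpa using hx)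

lemma exists_sep (hMD : IsMDColoring G Γ) {u v : V} (huv : u ≠ v) :
    ∃ c S, MBd G Γ S c ∧ u ∈ S ∧ v ∉ S := by
  obtain ⟨c, F, _, hcol, hreach⟩ := hMD u v huv
  refine ⟨c, {x | (G.deleteEdges F).Reachable u x}, ?_, Reachable.refl u, hreach⟩
  intro x y hxy hx hy
  have hF : s(x, y) ∈ F := by
    by_contra h
    exact hy (Reachable.trans hx (Adj.reachable (by rw [deleteEdges_adj]; exact ⟨hxy, h⟩)))
  exact hcol _ hF

lemma conn [Fintype V] (h3 : 3 ≤ Fintype.card V)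
    (h2conn : ∀ v : V, (G.induce {v}ᶜ).Connected) : G.Connected := by
  have hne : Nonempty V := Fintype.card_pos_iff.mp (by omega)
  rw [connected_iff]
  classical
  refine ⟨fun u v => ?_, hne⟩
  rcases eq_or_ne u v with rfl | huv
  · exact Reachable.refl u
  · have hex : ∃ w : V, w ≠ u ∧ w ≠ v := by
      by_contra h
      push_neg at h
      have hsub : (Finset.univ : Finset V) ⊆ {u, v} := by
        intro w _
        rcases eq_or_ne w u with rfl | hwu
        · exact Finset.mem_insert_self _ _
        · simp [h w hwu]
      have := Finset.card_le_card hsub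
      have h2 : ({u, v} : Finset V).card ≤ 2 := Finset.card_insert_le _ _ |>.trans (by simp)
      rw [Finset.card_univ] at this
      omega
    obtain ⟨w, hwu, hwv⟩ := hex
    have hu : u ∈ ({w}ᶜ : Set V) := by simp [hwu.symm]
    have hv : v ∈ ({w}ᶜ : Set V) := by simp [hwv.symm]
    have hreach := (h2conn w).preconnected ⟨u, hu⟩ ⟨v, hv⟩
    obtain ⟨p⟩ := hreach
    exact ⟨(p.map (⟨Subtype.val, fun {a b} h => by simpa using h⟩ : G.induce ({w}ᶜ : Set V) →g G)).copy rfl rfl⟩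

lemma exists_mid (hconn : G.Connected) (hdiam : ∀ u v : V, G.dist u v ≤ 2) {u v : V}
    (hne : u ≠ v) (hnadj : ¬ G.Adj u v) : ∃ w, G.Adj u w ∧ G.Adj w v := by
  obtain ⟨p, hp⟩ := hconn.exists_walk_length_eq_dist u v
  have hl : p.length ≤ 2 := by rw [hp]; exact hdiam u v
  cases p with
  | nil => exact absurd rfl hne
  | cons h q =>
    cases q with
    | nil => exact absurd h hnadj
    | cons h' r =>
      cases r with
      | nil => exact ⟨_, h, h'⟩
      | cons h'' r' =>
        simp only [Walk.length_cons] at hl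
        omega

/-- A star configuration: a nonempty center `Z` and, for each color `c` in a
set `K` of at least three colors, a nonempty "leaf" `L c` all of whose outside
neighbors lie in `Z`, joined to `Z` only by edges of color `c`. -/
structure Star (Z : Set V) (K : Finset ℕ) (L : ℕ → Set V) : Prop where
  hZ : Z.Nonempty
  hK : 3 ≤ K.card
  hLne : ∀ c ∈ K, (L c).Nonempty
  hLZ : ∀ c ∈ K, ∀ x ∈ L c, x ∉ Z
  hLL : ∀ c ∈ K, ∀ d ∈ K, c ≠ d → ∀ x ∈ L c, x ∉ L d
  hNb : ∀ c ∈ K, ∀ u ∈ L c, ∀ v, G.Adj u v → v ∈ L c ∨ v ∈ Z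
  hCol : ∀ c ∈ K, ∀ u ∈ L c, ∀ v ∈ Z, G.Adj u v → Γ s(u, v) = c
  hCov : ∀ v : V, v ∈ Z ∨ ∃ c ∈ K, v ∈ L c

lemma star_false [Fintype V] (h3 : 3 ≤ Fintype.card V)
    (h2conn : ∀ v : V, (G.induce {v}ᶜ).Connected)
    (hdiam : ∀ u v : V, G.dist u v ≤ 2)
    (hMD : IsMDColoring G Γ) (n : ℕ) :
    ∀ (Z : Set V) (K : Finset ℕ) (L : ℕ → Set V), Z.ncard = n → Star G Γ Z K L → False := by
  classical
  have hconn := conn G h3 h2conn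
  induction n using Nat.strong_induction_on with
  | _ n IH =>
  intro Z K L hn hst
  obtain ⟨z0, hz0⟩ := hst.hZ
  by_cases hz1 : ∃ z' ∈ Z, z' ≠ z0
  · obtain ⟨z1, hz1Z, hz1ne⟩ := hz1
    obtain ⟨c, S, hS, hz1S, hz0S⟩ := exists_sep G Γ hMD hz1ne
    have X : ∀ S' : Set V, MBd G Γ S' c →
        ∀ d ∈ K, d ≠ c → ∀ d' ∈ K, d' ≠ c → d ≠ d' →
        (∃ x ∈ L d, x ∈ S') → ∀ v ∈ L d', v ∈ S' := by
      rintro S' hS' d hd hdc d' hd' hd'c hdd' ⟨u, huL, huS⟩ v hvL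
      by_contra hvS
      have hune : u ≠ v := fun h => hst.hLL d hd d' hd' hdd' u huL (h ▸ hvL)
      have hnadj : ¬ G.Adj u v := by
        intro h
        rcases hst.hNb d hd u huL v h with h' | h'
        · exact hst.hLL d' hd' d hd (Ne.symm hdd') v hvL h'
        · exact hst.hLZ d' hd' v hvL h'
      obtain ⟨w, huw, hwv⟩ := exists_mid G hconn hdiam hune hnadj
      have hwZ : w ∈ Z := by
        rcases hst.hNb d hd u huL w huw with h1 | h1
        · rcases hst.hNb d' hd' v hvL w hwv.symm with h2 | h2
          · exact absurd h2 (hst.hLL d hd d' hd' hdd' w h1)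
          · exact h2
        · exact h1
      have hcw : Γ s(u, w) = d := hst.hCol d hd u huL w hwZ huw
      have hwS : w ∈ S' := by
        by_contra h
        exact hdc (hcw.symm.trans (hS' huw huS h))
      have hcv : Γ s(w, v) = c := hS' hwv hwS hvS
      have hdv : Γ s(v, w) = d' := hst.hCol d' hd' v hvL w hwZ hwv.symm
      rw [Sym2.eq_swap] at hcv
      exact hd'c (hdv.symm.trans hcv)
    have step : ∀ S' : Set V, MBd G Γ S' c → ∀ za zb, za ∈ Z → za ∈ S' → zb ∈ Z → zb ∉ S' →
        (∀ d ∈ K, d ≠ c → ∀ x ∈ L d, x ∈ S') → False := by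
      intro S' hS' za zb hzaZ hzaS hzbZ hzbS hP
      set W : Set V := (Z \ S') ∪ (if c ∈ K then L c else ∅) with hW
      set L' : ℕ → Set V := fun d => if d = c then W else L d with hL'
      have hWmem : ∀ x, x ∈ W ↔ (x ∈ Z ∧ x ∉ S') ∨ (c ∈ K ∧ x ∈ L c) := by
        intro x
        by_cases hcK : c ∈ K <;> simp [hW, hcK, Set.mem_diff]
      have hL'c : L' c = W := by rw [hL']; simp
      have hL'd : ∀ d, d ≠ c → L' d = L d := by
        intro d hdc; rw [hL']; simp [hdc]
      -- membership facts for W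
      have hWzb : zb ∈ W := (hWmem zb).2 (Or.inl ⟨hzbZ, hzbS⟩)
      -- the new star
      have hstar' : Star G Γ (Z ∩ S') (insert c K) L' := by
        refine { hZ := ⟨za, hzaZ, hzaS⟩, hK := ?_, hLne := ?_, hLZ := ?_, hLL := ?_,
                 hNb := ?_, hCol := ?_, hCov := ?_ }
        · exact le_trans hst.hK (Finset.card_le_card (Finset.subset_insert c K))
        · intro d hd
          by_cases hdc : d = c
          · rw [hdc, hL'c]
            exact ⟨zb, hWzb⟩
          · have hdK : d ∈ K := (Finset.mem_insert.mp hd).resolve_left hdc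
            rw [hL'd d hdc]
            exact hst.hLne d hdK
        · intro d hd x hx hxZ
          by_cases hdc : d = c
          · rw [hdc, hL'c] at hx
            rcases (hWmem x).1 hx with ⟨_, hxS⟩ | ⟨hcK, hxL⟩
            · exact hxS hxZ.2
            · exact hst.hLZ c hcK x hxL hxZ.1
          · have hdK : d ∈ K := (Finset.mem_insert.mp hd).resolve_left hdc
            rw [hL'd d hdc] at hx
            exact hst.hLZ d hdK x hx hxZ.1
        · intro d hd d' hd' hdd' x hx hx'
          by_cases hdc : d = c
          · have hd'c : d' ≠ c := fun h => hdd' (hdc.trans h.symm)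
            have hd'K : d' ∈ K := (Finset.mem_insert.mp hd').resolve_left hd'c
            rw [hdc, hL'c] at hx
            rw [hL'd d' hd'c] at hx'
            rcases (hWmem x).1 hx with ⟨hxZ, _⟩ | ⟨hcK, hxL⟩
            · exact hst.hLZ d' hd'K x hx' hxZ
            · exact hst.hLL c hcK d' hd'K (Ne.symm hd'c) x hxL hx'
          · by_cases hd'c : d' = c
            · have hdK : d ∈ K := (Finset.mem_insert.mp hd).resolve_left hdc
              rw [hL'd d hdc] at hx
              rw [hd'c, hL'c] at hx'
              rcases (hWmem x).1 hx' with ⟨hxZ, _⟩ | ⟨hcK, hxL⟩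
              · exact hst.hLZ d hdK x hx hxZ
              · exact hst.hLL d hdK c hcK hdc x hx hxL
            · have hdK : d ∈ K := (Finset.mem_insert.mp hd).resolve_left hdc
              have hd'K : d' ∈ K := (Finset.mem_insert.mp hd').resolve_left hd'c
              rw [hL'd d hdc] at hx
              rw [hL'd d' hd'c] at hx'
              exact hst.hLL d hdK d' hd'K hdd' x hx hx'
        · intro d hd u hu v hadj
          by_cases hdc : d = c
          · rw [hdc, hL'c] at hu ⊢
            rcases (hWmem u).1 hu with ⟨huZ, huS⟩ | ⟨hcK, huL⟩
            · rcases hst.hCov v with hvZ | ⟨e, heK, hvL⟩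
              · by_cases hvS : v ∈ S'
                · exact Or.inr ⟨hvZ, hvS⟩
                · exact Or.inl ((hWmem v).2 (Or.inl ⟨hvZ, hvS⟩))
              · by_cases hec : e = c
                · exact Or.inl ((hWmem v).2 (Or.inr ⟨hec ▸ heK, hec ▸ hvL⟩))
                · exfalso
                  have hvS : v ∈ S' := hP e heK hec v hvL
                  have h1 : Γ s(v, u) = c := hS' hadj.symm hvS huS
                  have h2 : Γ s(v, u) = e := hst.hCol e heK v hvL u huZ hadj.symm
                  exact hec (h2.symm.trans h1)
            · rcases hst.hNb c hcK u huL v hadj with h | h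
              · exact Or.inl ((hWmem v).2 (Or.inr ⟨hcK, h⟩))
              · by_cases hvS : v ∈ S'
                · exact Or.inr ⟨h, hvS⟩
                · exact Or.inl ((hWmem v).2 (Or.inl ⟨h, hvS⟩))
          · have hdK : d ∈ K := (Finset.mem_insert.mp hd).resolve_left hdc
            rw [hL'd d hdc] at hu ⊢
            rcases hst.hNb d hdK u hu v hadj with h | h
            · exact Or.inl h
            · by_cases hvS : v ∈ S'
              · exact Or.inr ⟨h, hvS⟩
              · exfalso
                have h1 : Γ s(u, v) = c := hS' hadj (hP d hdK hdc u hu) hvS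
                have h2 : Γ s(u, v) = d := hst.hCol d hdK u hu v h hadj
                exact hdc (h2.symm.trans h1)
        · intro d hd u hu v hvZ hadj
          by_cases hdc : d = c
          · rw [hdc, hL'c] at hu
            rw [hdc]
            rcases (hWmem u).1 hu with ⟨huZ, huS⟩ | ⟨hcK, huL⟩
            · rw [Sym2.eq_swap]
              exact hS' hadj.symm hvZ.2 huS
            · exact hst.hCol c hcK u huL v hvZ.1 hadj
          · have hdK : d ∈ K := (Finset.mem_insert.mp hd).resolve_left hdc
            rw [hL'd d hdc] at hu
            exact hst.hCol d hdK u hu v hvZ.1 hadj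
        · intro v
          rcases hst.hCov v with hvZ | ⟨e, heK, hvL⟩
          · by_cases hvS : v ∈ S'
            · exact Or.inl ⟨hvZ, hvS⟩
            · exact Or.inr ⟨c, Finset.mem_insert_self c K,
                hL'c ▸ (hWmem v).2 (Or.inl ⟨hvZ, hvS⟩)⟩
          · by_cases hec : e = c
            · exact Or.inr ⟨c, Finset.mem_insert_self c K,
                hL'c ▸ (hWmem v).2 (Or.inr ⟨hec ▸ heK, hec ▸ hvL⟩)⟩
            · exact Or.inr ⟨e, Finset.mem_insert_of_mem heK, (hL'd e hec) ▸ hvL⟩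
      have hss : (Z ∩ S') ⊂ Z :=
        (Set.ssubset_iff_of_subset Set.inter_subset_left).2 ⟨zb, hzbZ, fun h => hzbS h.2⟩
      have hlt : (Z ∩ S').ncard < n := hn ▸ Set.ncard_lt_ncard hss (Set.toFinite Z)
      exact IH _ hlt (Z ∩ S') (insert c K) L' rfl hstar'
    by_cases hQ : ∃ d ∈ K, d ≠ c ∧ ∃ x ∈ L d, x ∈ S
    · obtain ⟨d0, hd0K, hd0c, hd0ne⟩ := hQ
      have hP : ∀ d' ∈ K, d' ≠ c → ∀ x ∈ L d', x ∈ S := by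
        intro d' hd' hd'c
        rcases eq_or_ne d' d0 with h | h
        · have hd0ne : ∃ x ∈ L d', x ∈ S := by rw [h]; exact hd0ne
          have hex : ∃ e ∈ K, e ≠ c ∧ e ≠ d' := by
            by_contra h'
            push_neg at h'
            have hsub : K ⊆ {c, d'} := by
              intro e he
              rcases eq_or_ne e c with rfl | hec
              · exact Finset.mem_insert_self _ _
              · simp [h' e he hec]
            have hcard := Finset.card_le_card hsub
            have h2 : ({c, d'} : Finset ℕ).card ≤ 2 :=
              (Finset.card_insert_le _ _).trans (by simp)
            have := hst.hK
            omega
          obtain ⟨e, heK, hec, hed⟩ := hex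
          have hLe : ∀ x ∈ L e, x ∈ S := X S hS d' hd' hd'c e heK hec (Ne.symm hed) hd0ne
          obtain ⟨y, hy⟩ := hst.hLne e heK
          exact X S hS e heK hec d' hd' hd'c hed ⟨y, hy, hLe y hy⟩
        · exact X S hS d0 hd0K hd0c d' hd' hd'c (Ne.symm h) hd0ne
      exact step S hS z1 z0 hz1Z hz1S hz0 hz0S hP
    · push_neg at hQ
      have hP : ∀ d' ∈ K, d' ≠ c → ∀ x ∈ L d', x ∈ Sᶜ := fun d' hd' hd'c x hx =>
        hQ d' hd' hd'c x hx
      exact step Sᶜ (mbd_compl G Γ hS) z0 z1 hz0 hz0S hz1Z (fun h => h hz1S) hP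
  · push_neg at hz1
    have hKne : K.Nonempty := Finset.card_pos.mp (by have := hst.hK; omega)
    obtain ⟨d1, hd1K⟩ := hKne
    have hKe : (K.erase d1).Nonempty := Finset.card_pos.mp
      (by rw [Finset.card_erase_of_mem hd1K]; have := hst.hK; omega)
    obtain ⟨d2, hd2e⟩ := hKe
    have hd2K : d2 ∈ K := Finset.mem_of_mem_erase hd2e
    have hd21 : d2 ≠ d1 := Finset.ne_of_mem_erase hd2e
    obtain ⟨a, ha⟩ := hst.hLne d1 hd1K
    obtain ⟨b, hb⟩ := hst.hLne d2 hd2K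
    have haz : a ≠ z0 := fun h => hst.hLZ d1 hd1K a ha (h ▸ hz0)
    have hbz : b ≠ z0 := fun h => hst.hLZ d2 hd2K b hb (h ▸ hz0)
    have hreach := (h2conn z0).preconnected ⟨a, by simp [haz]⟩ ⟨b, by simp [hbz]⟩
    obtain ⟨p⟩ := hreach
    have key : ∀ (x y : ({z0}ᶜ : Set V)), (G.induce {z0}ᶜ).Walk x y →
        (x : V) ∈ L d1 → (y : V) ∈ L d1 := by
      intro x y p
      induction p with
      | nil => exact id
      | @cons x w y h q ih =>
        intro hx
        apply ih
        have hadj : G.Adj (x : V) (w : V) := by simpa using h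
        rcases hst.hNb d1 hd1K _ hx _ hadj with h' | h'
        · exact h'
        · exact absurd (hz1 _ h') (Set.mem_compl_singleton_iff.mp w.2)
    have hbL : b ∈ L d1 := key _ _ p ha
    exact hst.hLL d1 hd1K d2 hd2K (Ne.symm hd21) b hbL hb

lemma build_star [Fintype V] (hconn : G.Connected) (hdiam : ∀ u v : V, G.dist u v ≤ 2)
    {c1 c2 c3 : ℕ} (h12 : c1 ≠ c2) (h13 : c1 ≠ c3) (h23 : c2 ≠ c3)
    {S1 S2 S3 : Set V}
    (m1 : MBd G Γ S1 c1) (m2 : MBd G Γ S2 c2) (m3 : MBd G Γ S3 c3)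
    {u1 v1 u2 v2 u3 v3 : V}
    (a1 : G.Adj u1 v1) (hu1 : u1 ∈ S1) (hv1 : v1 ∉ S1)
    (a2 : G.Adj u2 v2) (hu2 : u2 ∈ S2) (hv2 : v2 ∉ S2)
    (a3 : G.Adj u3 v3) (hu3 : u3 ∈ S3) (hv3 : v3 ∉ S3) :
    ∃ (Z : Set V) (L : ℕ → Set V), Star G Γ Z ({c1, c2, c3} : Finset ℕ) L := by
  classical
  set χ : V → B3 := fun x => (decide (x ∈ S1), decide (x ∈ S2), decide (x ∈ S3)) with hχ
  have hd1 : ∀ x y : V, G.Adj x y → (χ x).1 ≠ (χ y).1 → Γ s(x, y) = c1 := by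
    intro x y hxy hne
    by_cases hx : x ∈ S1 <;> by_cases hy : y ∈ S1
    · exact absurd (by simp [hχ, hx, hy]) hne
    · exact m1 hxy hx hy
    · rw [Sym2.eq_swap]; exact m1 hxy.symm hy hx
    · exact absurd (by simp [hχ, hx, hy]) hne
  have hd2 : ∀ x y : V, G.Adj x y → (χ x).2.1 ≠ (χ y).2.1 → Γ s(x, y) = c2 := by
    intro x y hxy hne
    by_cases hx : x ∈ S2 <;> by_cases hy : y ∈ S2
    · exact absurd (by simp [hχ, hx, hy]) hne
    · exact m2 hxy hx hy
    · rw [Sym2.eq_swap]; exact m2 hxy.symm hy hx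
    · exact absurd (by simp [hχ, hx, hy]) hne
  have hd3 : ∀ x y : V, G.Adj x y → (χ x).2.2 ≠ (χ y).2.2 → Γ s(x, y) = c3 := by
    intro x y hxy hne
    by_cases hx : x ∈ S3 <;> by_cases hy : y ∈ S3
    · exact absurd (by simp [hχ, hx, hy]) hne
    · exact m3 hxy hx hy
    · rw [Sym2.eq_swap]; exact m3 hxy.symm hy hx
    · exact absurd (by simp [hχ, hx, hy]) hne
  have hnear : ∀ x y : V, G.Adj x y → Near (χ x) (χ y) := by
    intro x y h
    refine ⟨?_, ?_, ?_⟩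
    · rintro ⟨ha, hb⟩
      exact h12 ((hd1 x y h ha).symm.trans (hd2 x y h hb))
    · rintro ⟨ha, hb⟩
      exact h13 ((hd1 x y h ha).symm.trans (hd3 x y h hb))
    · rintro ⟨ha, hb⟩
      exact h23 ((hd2 x y h ha).symm.trans (hd3 x y h hb))
  set g : B3 → Bool := fun a => decide (∃ x, χ x = a) with hg
  have hgiff : ∀ a, g a = true ↔ ∃ x, χ x = a := by
    intro a; simp [hg]
  have hanti : ∀ a b, g a = true → g b = true →
      a.1 ≠ b.1 → a.2.1 ≠ b.2.1 → a.2.2 ≠ b.2.2 → False := by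
    intro a b hga hgb n1 n2 n3
    obtain ⟨x, rfl⟩ := (hgiff a).1 hga
    obtain ⟨y, rfl⟩ := (hgiff b).1 hgb
    have hne : x ≠ y := fun h => n1 (h ▸ rfl)
    have hnadj : ¬ G.Adj x y := fun h => (hnear x y h).1 ⟨n1, n2⟩
    obtain ⟨w, hw1, hw2⟩ := exists_mid G hconn hdiam hne hnadj
    exact bool_anti_mid (χ x) (χ y) (χ w) n1 n2 n3 (hnear x w hw1)
      (hnear w y hw2)
  have hedge1 : χ v1 = bf1 (χ u1) := by
    have hne1 : (χ u1).1 ≠ (χ v1).1 := by simp [hχ, hu1, hv1]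
    have heq2 : (χ u1).2.1 = (χ v1).2.1 := by
      by_contra h; exact (hnear u1 v1 a1).1 ⟨hne1, h⟩
    have heq3 : (χ u1).2.2 = (χ v1).2.2 := by
      by_contra h; exact (hnear u1 v1 a1).2.1 ⟨hne1, h⟩
    have : (χ v1).1 = !(χ u1).1 := bnot_of_ne _ _ hne1
    unfold bf1
    ext1
    · exact this
    ext1
    · exact heq2.symm
    · exact heq3.symm
  have hedge2 : χ v2 = bf2 (χ u2) := by
    have hne1 : (χ u2).2.1 ≠ (χ v2).2.1 := by simp [hχ, hu2, hv2]
    have heq2 : (χ u2).1 = (χ v2).1 := by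
      by_contra h; exact (hnear u2 v2 a2).1 ⟨h, hne1⟩
    have heq3 : (χ u2).2.2 = (χ v2).2.2 := by
      by_contra h; exact (hnear u2 v2 a2).2.2 ⟨hne1, h⟩
    have : (χ v2).2.1 = !(χ u2).2.1 := bnot_of_ne _ _ hne1
    unfold bf2
    ext1
    · exact heq2.symm
    ext1
    · exact this
    · exact heq3.symm
  have hedge3 : χ v3 = bf3 (χ u3) := by
    have hne1 : (χ u3).2.2 ≠ (χ v3).2.2 := by simp [hχ, hu3, hv3]
    have heq2 : (χ u3).1 = (χ v3).1 := by
      by_contra h; exact (hnear u3 v3 a3).2.1 ⟨h, hne1⟩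
    have heq3 : (χ u3).2.1 = (χ v3).2.1 := by
      by_contra h; exact (hnear u3 v3 a3).2.2 ⟨h, hne1⟩
    have : (χ v3).2.2 = !(χ u3).2.2 := bnot_of_ne _ _ hne1
    unfold bf3
    ext1
    · exact heq2.symm
    ext1
    · exact heq3.symm
    · exact this
  obtain ⟨m, hm, hm1, hm2, hm3, hcls⟩ := bool_claw g hanti
    ⟨χ u1, (hgiff _).2 ⟨u1, rfl⟩, (hgiff _).2 ⟨v1, hedge1⟩⟩
    ⟨χ u2, (hgiff _).2 ⟨u2, rfl⟩, (hgiff _).2 ⟨v2, hedge2⟩⟩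
    ⟨χ u3, (hgiff _).2 ⟨u3, rfl⟩, (hgiff _).2 ⟨v3, hedge3⟩⟩
  obtain ⟨hb1m, hb2m, hb3m, hb12, hb13, hb23⟩ := bool_bf_ne m
  set Z : Set V := {x | χ x = m} with hZdef
  set X1 : Set V := {x | χ x = bf1 m} with hX1def
  set X2 : Set V := {x | χ x = bf2 m} with hX2def
  set X3 : Set V := {x | χ x = bf3 m} with hX3def
  set L : ℕ → Set V := fun d => if d = c1 then X1 else if d = c2 then X2 else X3 with hLdef
  have hLc1 : L c1 = X1 := by rw [hLdef]; simp
  have hLc2 : L c2 = X2 := by rw [hLdef]; simp [Ne.symm h12]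
  have hLc3 : L c3 = X3 := by rw [hLdef]; simp [Ne.symm h13, Ne.symm h23]
  have hKmem : ∀ d, d ∈ ({c1, c2, c3} : Finset ℕ) ↔ d = c1 ∨ d = c2 ∨ d = c3 := by
    intro d; simp
  -- classification of L d for d ∈ K
  have hLcases : ∀ d ∈ ({c1, c2, c3} : Finset ℕ),
      (L d = X1 ∧ d = c1) ∨ (L d = X2 ∧ d = c2) ∨ (L d = X3 ∧ d = c3) := by
    intro d hd
    rcases (hKmem d).1 hd with rfl | rfl | rfl
    · exact Or.inl ⟨hLc1, rfl⟩
    · exact Or.inr (Or.inl ⟨hLc2, rfl⟩)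
    · exact Or.inr (Or.inr ⟨hLc3, rfl⟩)
  refine ⟨Z, L, ?_⟩
  have hgm := (hgiff _).1 hm
  have hgm1 := (hgiff _).1 hm1
  have hgm2 := (hgiff _).1 hm2
  have hgm3 := (hgiff _).1 hm3
  -- neighbor property for each leaf
  have hNbX : ∀ (i : Fin 3), True := fun _ => trivial
  refine { hZ := ?_, hK := ?_, hLne := ?_, hLZ := ?_, hLL := ?_, hNb := ?_, hCol := ?_,
           hCov := ?_ }
  · obtain ⟨x, hx⟩ := hgm; exact ⟨x, hx⟩
  · rw [Finset.card_insert_of_notMem (by simp [h12, h13]),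
      Finset.card_insert_of_notMem (by simp [h23]), Finset.card_singleton]
  · intro d hd
    rcases hLcases d hd with ⟨hL, _⟩ | ⟨hL, _⟩ | ⟨hL, _⟩ <;> rw [hL]
    · obtain ⟨x, hx⟩ := hgm1; exact ⟨x, hx⟩
    · obtain ⟨x, hx⟩ := hgm2; exact ⟨x, hx⟩
    · obtain ⟨x, hx⟩ := hgm3; exact ⟨x, hx⟩
  · intro d hd x hx hxZ
    rcases hLcases d hd with ⟨hL, _⟩ | ⟨hL, _⟩ | ⟨hL, _⟩ <;> rw [hL] at hx
    · exact hb1m (hx.symm.trans hxZ)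
    · exact hb2m (hx.symm.trans hxZ)
    · exact hb3m (hx.symm.trans hxZ)
  · intro d hd d' hd' hdd' x hx hx'
    rcases hLcases d hd with ⟨hL, rfl⟩ | ⟨hL, rfl⟩ | ⟨hL, rfl⟩ <;>
      rcases hLcases d' hd' with ⟨hL', rfl⟩ | ⟨hL', rfl⟩ | ⟨hL', rfl⟩ <;>
      first
        | exact hdd' rfl
        | (rw [hL] at hx; rw [hL'] at hx'
           first
             | exact hb12 (hx.symm.trans hx')
             | exact hb13 (hx.symm.trans hx')
             | exact hb23 (hx.symm.trans hx')
             | exact hb12 (hx'.symm.trans hx)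
             | exact hb13 (hx'.symm.trans hx)
             | exact hb23 (hx'.symm.trans hx))
  · intro d hd u hu v hadj
    have hgv : g (χ v) = true := (hgiff _).2 ⟨v, rfl⟩
    have hcl := hcls (χ v) hgv
    rcases hLcases d hd with ⟨hL, _⟩ | ⟨hL, _⟩ | ⟨hL, _⟩ <;> rw [hL] at hu ⊢
    · rcases bool_leaf1 m (χ v) hcl (hu ▸ hnear u v hadj) with h | h
      · exact Or.inl h
      · exact Or.inr h
    · rcases bool_leaf2 m (χ v) hcl (hu ▸ hnear u v hadj) with h | h
      · exact Or.inl h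
      · exact Or.inr h
    · rcases bool_leaf3 m (χ v) hcl (hu ▸ hnear u v hadj) with h | h
      · exact Or.inl h
      · exact Or.inr h
  · intro d hd u hu v hvZ hadj
    have hvm : χ v = m := hvZ
    rcases hLcases d hd with ⟨hL, rfl⟩ | ⟨hL, rfl⟩ | ⟨hL, rfl⟩ <;> rw [hL] at hu
    · refine hd1 u v hadj ?_
      rw [hu, hvm]
      unfold bf1
      simp
    · refine hd2 u v hadj ?_
      rw [hu, hvm]
      unfold bf2
      simp
    · refine hd3 u v hadj ?_
      rw [hu, hvm]
      unfold bf3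
      simp
  · intro v
    have hgv : g (χ v) = true := (hgiff _).2 ⟨v, rfl⟩
    rcases hcls (χ v) hgv with h | h | h | h
    · exact Or.inl h
    · exact Or.inr ⟨c1, by simp, hLc1 ▸ h⟩
    · exact Or.inr ⟨c2, by simp, hLc2 ▸ h⟩
    · exact Or.inr ⟨c3, by simp, hLc3 ▸ h⟩

lemma ncard_le [Fintype V] (G : SimpleGraph V) (Γ : Sym2 V → ℕ)
    (h3 : 3 ≤ Fintype.card V)
    (h2conn : ∀ v : V, (G.induce {v}ᶜ).Connected)
    (hdiam : ∀ u v : V, G.dist u v ≤ 2)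
    (hMD : IsMDColoring G Γ) : (Γ '' G.edgeSet).ncard ≤ 2 := by
  classical
  by_contra hgt
  push_neg at hgt
  have hfin : (Γ '' G.edgeSet).Finite := (Set.toFinite _).image Γ
  obtain ⟨a, b, c, ha, hb, hc, hab, hac, hbc⟩ := (Set.two_lt_ncard_iff hfin).1 hgt
  have hconn := conn G h3 h2conn
  have getS : ∀ c : ℕ, c ∈ Γ '' G.edgeSet →
      ∃ (S : Set V) (u v : V), MBd G Γ S c ∧ G.Adj u v ∧ u ∈ S ∧ v ∉ S := by
    rintro c ⟨e, he, rfl⟩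
    induction e using Sym2.ind with
    | _ u v =>
      have hadj : G.Adj u v := by simpa using he
      obtain ⟨c', S, hS, huS, hvS⟩ := exists_sep G Γ hMD hadj.ne
      have hcc : Γ s(u, v) = c' := hS hadj huS hvS
      exact ⟨S, u, v, by rw [hcc]; exact hS, hadj, huS, hvS⟩
  obtain ⟨Sa, ua, va, mSa, aa, hua, hva⟩ := getS a ha
  obtain ⟨Sb, ub, vb, mSb, ab, hub, hvb⟩ := getS b hb
  obtain ⟨Sc, uc, vc, mSc, ac, huc, hvc⟩ := getS c hc
  obtain ⟨Z, L, hstar⟩ := build_star G Γ hconn hdiam hab hac hbc mSa mSb mSc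
    aa hua hva ab hub hvb ac huc hvc
  exact star_false G Γ h3 h2conn hdiam hMD Z.ncard Z _ L rfl hstar

end MDaux

/-- A 2-connected graph of diameter at most 2 has `md(G) ≤ 2`. -/
theorem stmt_15 [Fintype V] (G : SimpleGraph V)
    (h3 : 3 ≤ Fintype.card V)
    (h2conn : ∀ v : V, (G.induce {v}ᶜ).Connected)
    (hdiam : ∀ u v : V, G.dist u v ≤ 2) :
    mdNumber G ≤ 2 := by
  refine csSup_le' ?_
  rintro k ⟨Γ, hMD, rfl⟩
  exact MDaux.ncard_le G Γ h3 h2conn hdiam hMD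
end

section
/- Let G be a connected graph in which any two nonadjacent vertices have at least two common neighbors. Then md(G) ≤ 2, and md(G) = 2 if and only if G is the Cartesian product K_s □ K_t of two complete graphs with s, t ≥ 2. -/
open SimpleGraph

variable {V : Type*}

namespace MDProof

def Hg (G : SimpleGraph V) (Γ : Sym2 V → ℕ) (i : ℕ) : SimpleGraph V :=
  G.deleteEdges {e | Γ e = i}

noncomputable def cc (G : SimpleGraph V) (Γ : Sym2 V → ℕ) (i : ℕ) (v : V) :
    (Hg G Γ i).ConnectedComponent :=
  (Hg G Γ i).connectedComponentMk v

variable {G : SimpleGraph V} {Γ : Sym2 V → ℕ}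

lemma walk_invariant {M : Type*} {K : SimpleGraph V} (f : V → M)
    (hf : ∀ a b, K.Adj a b → f a = f b) {u v : V} (h : K.Reachable u v) : f u = f v := by
  obtain ⟨w⟩ := h
  induction w with
  | nil => rfl
  | cons h p ih => exact (hf _ _ h).trans ih

lemma sep_iff {i : ℕ} {u v : V} :
    separatesColor G Γ i u v ↔ ¬ (Hg G Γ i).Reachable u v := by
  constructor
  · rintro ⟨F, hFE, hFc, hnr⟩ hr
    refine hnr (hr.mono ?_)
    intro a b hab
    rw [Hg, deleteEdges_adj] at hab
    rw [deleteEdges_adj]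
    exact ⟨hab.1, fun hm => hab.2 (hFc _ hm)⟩
  · intro h
    refine ⟨{e | Γ e = i} ∩ G.edgeSet, Set.inter_subset_right, fun e he => he.1,
      fun hr => h (hr.mono ?_)⟩
    intro a b hab
    rw [deleteEdges_adj] at hab
    rw [Hg, deleteEdges_adj]
    exact ⟨hab.1, fun hm => hab.2 ⟨hm, (G.mem_edgeSet).mpr hab.1⟩⟩

lemma md_diff (hmd : IsMDColoring G Γ) {u v : V} (h : u ≠ v) :
    ∃ i, cc G Γ i u ≠ cc G Γ i v := by
  obtain ⟨i, hi⟩ := hmd u v h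
  exact ⟨i, fun hc => (sep_iff.mp hi) (ConnectedComponent.exact hc)⟩

lemma ccAdjEq {u v : V} (h : G.Adj u v) {j : ℕ} (hj : Γ s(u, v) ≠ j) :
    cc G Γ j u = cc G Γ j v :=
  ConnectedComponent.sound (SimpleGraph.Adj.reachable (by
    rw [Hg, deleteEdges_adj]
    exact ⟨h, hj⟩))

lemma ccAdjNe (hmd : IsMDColoring G Γ) {u v : V} (h : G.Adj u v) :
    cc G Γ (Γ s(u, v)) u ≠ cc G Γ (Γ s(u, v)) v := by
  obtain ⟨i, hi⟩ := md_diff hmd h.ne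
  by_cases hiΓ : Γ s(u, v) = i
  · rwa [hiΓ]
  · exact absurd (ccAdjEq h hiΓ) hi

lemma inj_full (hmd : IsMDColoring G Γ) {u v : V}
    (h : ∀ k, cc G Γ k u = cc G Γ k v) : u = v := by
  by_contra hne
  obtain ⟨i, hi⟩ := md_diff hmd hne
  exact hi (h i)


lemma common_nonempty [Fintype V]
    (hcn : ∀ u v : V, u ≠ v → ¬ G.Adj u v →
      2 ≤ (G.neighborSet u ∩ G.neighborSet v).ncard)
    {u v : V} (hne : u ≠ v) (hna : ¬ G.Adj u v) :
    ∃ h, G.Adj u h ∧ G.Adj v h := by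
  have h2 := hcn u v hne hna
  obtain ⟨h, hh⟩ := Set.nonempty_of_ncard_ne_zero
    (show (G.neighborSet u ∩ G.neighborSet v).ncard ≠ 0 by omega)
  exact ⟨h, hh.1, hh.2⟩

lemma two_common [Fintype V]
    (hcn : ∀ u v : V, u ≠ v → ¬ G.Adj u v →
      2 ≤ (G.neighborSet u ∩ G.neighborSet v).ncard)
    {u v : V} (hne : u ≠ v) (hna : ¬ G.Adj u v) :
    ∃ h1 h2, h1 ≠ h2 ∧ G.Adj u h1 ∧ G.Adj v h1 ∧ G.Adj u h2 ∧ G.Adj v h2 := by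
  have h2 := hcn u v hne hna
  have h1lt : 1 < (G.neighborSet u ∩ G.neighborSet v).ncard := by omega
  rw [Set.one_lt_ncard_iff (Set.toFinite _)] at h1lt
  obtain ⟨a, b, ha, hb, hab⟩ := h1lt
  exact ⟨a, b, hab, ha.1, ha.2, hb.1, hb.2⟩

lemma cover_of_ne [Fintype V]
    (hcn : ∀ u v : V, u ≠ v → ¬ G.Adj u v →
      2 ≤ (G.neighborSet u ∩ G.neighborSet v).ncard)
    {u v : V} (hne : u ≠ v) :
    ∃ i j, ∀ k, cc G Γ (V := V) k u ≠ cc G Γ k v → k = i ∨ k = j := by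
  by_cases hadj : G.Adj u v
  · refine ⟨Γ s(u, v), Γ s(u, v), fun k hk => Or.inl ?_⟩
    by_contra hcon
    exact hk (ccAdjEq hadj fun h => hcon h.symm)
  · obtain ⟨h, hu, hv⟩ := common_nonempty hcn hne hadj
    refine ⟨Γ s(u, h), Γ s(v, h), fun k hk => ?_⟩
    by_contra hcon
    push_neg at hcon
    exact hk ((ccAdjEq hu fun h => hcon.1 h.symm).trans
      (ccAdjEq hv fun h => hcon.2 h.symm).symm)


section PartI
variable [Fintype V]

/-- Under the common-neighbor hypothesis, an MD-coloring cannot use three distinct colors. -/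
lemma not_three (hmd : IsMDColoring G Γ)
    (hcn : ∀ u v : V, u ≠ v → ¬ G.Adj u v →
      2 ≤ (G.neighborSet u ∩ G.neighborSet v).ncard)
    {a b c : ℕ} (hab : a ≠ b) (hac : a ≠ c) (hbc : b ≠ c)
    {u v p q r w' : V}
    (hea : G.Adj u v) (hCa : Γ s(u, v) = a)
    (heb : G.Adj p q) (hCb : Γ s(p, q) = b)
    (hec : G.Adj r w') (hCc : Γ s(r, w') = c) : False := by
  -- abbreviation for the "covered by two colors" fact
  -- Step 0: basic diffs from the three edges
  have Duv : cc G Γ a u ≠ cc G Γ a v := hCa ▸ ccAdjNe hmd hea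
  have Dpq : cc G Γ b p ≠ cc G Γ b q := hCb ▸ ccAdjNe hmd heb
  have Drw : cc G Γ c r ≠ cc G Γ c w' := hCc ▸ ccAdjNe hmd hec
  -- Step 1: find x, y with  a,c ∈ D(x,y)  and D(x,y) ⊆ {a,c}
  obtain ⟨w, hwc⟩ : ∃ w, cc G Γ c w ≠ cc G Γ c u := by
    by_cases h : cc G Γ c r = cc G Γ c u
    · exact ⟨w', fun hq => Drw (h.trans hq.symm)⟩
    · exact ⟨r, h⟩
  obtain ⟨x, Dax, Dcx⟩ :
      ∃ x, cc G Γ a x ≠ cc G Γ a w ∧ cc G Γ c x ≠ cc G Γ c w := by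
    by_cases h : cc G Γ a w = cc G Γ a u
    · refine ⟨v, fun h2 => Duv (h2.trans h).symm, ?_⟩
      have : cc G Γ c u = cc G Γ c v := ccAdjEq hea (by rw [hCa]; exact hac)
      exact fun h2 => hwc ((this.trans h2).symm)
    · exact ⟨u, fun h2 => h h2.symm, fun h2 => hwc h2.symm⟩
  -- D(x,w) is covered by {a,c}
  have hxw : x ≠ w := fun h => Dax (h ▸ rfl)
  obtain ⟨i0, j0, hcov0⟩ := cover_of_ne hcn hxw
  have covxw : ∀ k, cc G Γ k x ≠ cc G Γ k w → k = a ∨ k = c := by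
    intro k hk
    have h1 := hcov0 k hk
    have h2 := hcov0 a Dax
    have h3 := hcov0 c Dcx
    omega
  set y := w with hy
  -- b ∉ D(x,y)
  have Dbxy : cc G Γ b x = cc G Γ b y := by
    by_contra h
    rcases covxw b h with h | h
    · exact hab h.symm
    · exact hbc h
  -- x,y nonadjacent
  have hnadjxy : ¬ G.Adj x y := by
    intro hadj
    have h1 : Γ s(x, y) = a ∨ Γ s(x, y) = c := by
      by_contra hcon
      push_neg at hcon
      exact Dax (ccAdjEq hadj hcon.1)
    rcases h1 with h1 | h1
    · exact Dcx (ccAdjEq hadj (by rw [h1]; exact hac))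
    · exact Dax (ccAdjEq hadj (by rw [h1]; exact fun hh => hac hh.symm))
  -- two common neighbours, each of type A or type C
  obtain ⟨h1, h2, h12, hx1, hy1, hx2, hy2⟩ := two_common hcn hxw hnadjxy
  have htype : ∀ h, G.Adj x h → G.Adj y h →
      (Γ s(x, h) = a ∧ Γ s(y, h) = c) ∨ (Γ s(x, h) = c ∧ Γ s(y, h) = a) := by
    intro h hxh hyh
    have hA : a = Γ s(x, h) ∨ a = Γ s(y, h) := by
      by_contra hcon
      push_neg at hcon
      exact Dax ((ccAdjEq hxh fun hh => hcon.1 hh.symm).trans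
        (ccAdjEq hyh fun hh => hcon.2 hh.symm).symm)
    have hC : c = Γ s(x, h) ∨ c = Γ s(y, h) := by
      by_contra hcon
      push_neg at hcon
      exact Dcx ((ccAdjEq hxh fun hh => hcon.1 hh.symm).trans
        (ccAdjEq hyh fun hh => hcon.2 hh.symm).symm)
    rcases hA with hA | hA <;> rcases hC with hC | hC
    · exact absurd (hA.trans hC.symm) hac
    · exact Or.inl ⟨hA.symm, hC.symm⟩
    · exact Or.inr ⟨hC.symm, hA.symm⟩
    · exact absurd (hA.trans hC.symm) hac
  -- the final contradiction, given a type-A and a type-C common neighbour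
  have final : ∀ mA mC : V, G.Adj x mA → G.Adj y mA → G.Adj x mC → G.Adj y mC →
      Γ s(x, mA) = a → Γ s(y, mA) = c → Γ s(x, mC) = c → Γ s(y, mC) = a → False := by
    intro mA mC hxA hyA hxC hyC tA1 tA2 tC1 tC2
    have pA1 : ∀ k, k ≠ a → cc G Γ k mA = cc G Γ k x :=
      fun k hk => (ccAdjEq hxA (by rw [tA1]; exact fun hh => hk hh.symm)).symm
    have pA2 : cc G Γ a mA = cc G Γ a y :=
      (ccAdjEq hyA (by rw [tA2]; exact fun hh => hac hh.symm)).symm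
    have pC1 : ∀ k, k ≠ c → cc G Γ k mC = cc G Γ k x :=
      fun k hk => (ccAdjEq hxC (by rw [tC1]; exact fun hh => hk hh.symm)).symm
    have pC2 : cc G Γ c mC = cc G Γ c y :=
      (ccAdjEq hyC (by rw [tC2]; exact fun hh => hac hh)).symm
    -- a vertex whose b-coordinate differs from x
    obtain ⟨p', hpb⟩ : ∃ p', cc G Γ b p' ≠ cc G Γ b x := by
      by_cases h : cc G Γ b p = cc G Γ b x
      · exact ⟨q, fun hq => Dpq (h.trans hq.symm)⟩
      · exact ⟨p, h⟩
    have hp'x : p' ≠ x := fun h => hpb (h ▸ rfl)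
    by_cases hap : cc G Γ a p' = cc G Γ a x
    · by_cases hcp : cc G Γ c p' = cc G Γ c x
      · -- compare p' with y
        have ha' : cc G Γ a p' ≠ cc G Γ a y := by rw [hap]; exact Dax
        have hc' : cc G Γ c p' ≠ cc G Γ c y := by rw [hcp]; exact Dcx
        have hb' : cc G Γ b p' ≠ cc G Γ b y := by rw [← Dbxy]; exact hpb
        obtain ⟨i, j, hcv⟩ := cover_of_ne hcn (show p' ≠ y from fun h => ha' (h ▸ rfl))
        have e1 := hcv a ha'
        have e2 := hcv b hb'
        have e3 := hcv c hc'
        omega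
      · -- compare p' with mA
        have ha' : cc G Γ a p' ≠ cc G Γ a mA := by rw [hap, pA2]; exact Dax
        have hb' : cc G Γ b p' ≠ cc G Γ b mA := by rw [pA1 b (Ne.symm hab)]; exact hpb
        have hc' : cc G Γ c p' ≠ cc G Γ c mA := by rw [pA1 c (Ne.symm hac)]; exact hcp
        obtain ⟨i, j, hcv⟩ := cover_of_ne hcn (show p' ≠ mA from fun h => hc' (h ▸ rfl))
        have e1 := hcv a ha'
        have e2 := hcv b hb'
        have e3 := hcv c hc'
        omega
    · -- first: the c-coordinates of p' and x agree
      have hcp : cc G Γ c p' = cc G Γ c x := by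
        by_contra h
        obtain ⟨i, j, hcv⟩ := cover_of_ne hcn hp'x
        have e1 := hcv a hap
        have e2 := hcv b hpb
        have e3 := hcv c h
        omega
      -- compare p' with mC
      have ha' : cc G Γ a p' ≠ cc G Γ a mC := by rw [pC1 a hac]; exact hap
      have hb' : cc G Γ b p' ≠ cc G Γ b mC := by rw [pC1 b hbc]; exact hpb
      have hc' : cc G Γ c p' ≠ cc G Γ c mC := by rw [pC2, hcp]; exact Dcx
      obtain ⟨i, j, hcv⟩ := cover_of_ne hcn (show p' ≠ mC from fun h => ha' (h ▸ rfl))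
      have e1 := hcv a ha'
      have e2 := hcv b hb'
      have e3 := hcv c hc'
      omega
  -- case analysis on the types of the two common neighbours
  rcases htype h1 hx1 hy1 with t1 | t1 <;> rcases htype h2 hx2 hy2 with t2 | t2
  · -- both type A : h1 = h2, contradiction
    refine h12 (inj_full hmd fun k => ?_)
    by_cases hk : k = a
    · subst hk
      exact ((ccAdjEq hy1 (by rw [t1.2]; exact fun hh => hac hh.symm)).symm).trans
        (ccAdjEq hy2 (by rw [t2.2]; exact fun hh => hac hh.symm))
    · exact ((ccAdjEq hx1 (by rw [t1.1]; exact fun hh => hk hh.symm)).symm).trans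
        (ccAdjEq hx2 (by rw [t2.1]; exact fun hh => hk hh.symm))
  · exact final h1 h2 hx1 hy1 hx2 hy2 t1.1 t1.2 t2.1 t2.2
  · exact final h2 h1 hx2 hy2 hx1 hy1 t2.1 t2.2 t1.1 t1.2
  · -- both type C : h1 = h2, contradiction
    refine h12 (inj_full hmd fun k => ?_)
    by_cases hk : k = c
    · subst hk
      exact ((ccAdjEq hy1 (by rw [t1.2]; exact fun hh => hac hh)).symm).trans
        (ccAdjEq hy2 (by rw [t2.2]; exact fun hh => hac hh))
    · exact ((ccAdjEq hx1 (by rw [t1.1]; exact fun hh => hk hh.symm)).symm).trans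
        (ccAdjEq hx2 (by rw [t2.1]; exact fun hh => hk hh.symm))

omit [Fintype V] in
lemma exists_edge_of_mem_image {x : ℕ} (hx : x ∈ Γ '' G.edgeSet) :
    ∃ u v, G.Adj u v ∧ Γ s(u, v) = x := by
  obtain ⟨e, he, hΓ⟩ := hx
  induction e using Sym2.ind with
  | _ u v => exact ⟨u, v, (G.mem_edgeSet).mp he, hΓ⟩

lemma ncard_le_two (hmd : IsMDColoring G Γ)
    (hcn : ∀ u v : V, u ≠ v → ¬ G.Adj u v →
      2 ≤ (G.neighborSet u ∩ G.neighborSet v).ncard) :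
    (Γ '' G.edgeSet).ncard ≤ 2 := by
  by_contra h
  push_neg at h
  have hfin : (Γ '' G.edgeSet).Finite := Set.toFinite _
  rw [Set.ncard_eq_toFinset_card _ hfin, Finset.two_lt_card_iff] at h
  obtain ⟨a, b, c, ha, hb, hc, hab, hac, hbc⟩ := h
  rw [Set.Finite.mem_toFinset] at ha hb hc
  obtain ⟨u, v, hea, hCa⟩ := exists_edge_of_mem_image ha
  obtain ⟨p, q, heb, hCb⟩ := exists_edge_of_mem_image hb
  obtain ⟨r, w', hec, hCc⟩ := exists_edge_of_mem_image hc
  exact not_three hmd hcn hab hac hbc hea hCa heb hCb hec hCc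

end PartI

section PartII
variable [Fintype V]

omit [Fintype V] in
lemma cc_unused (hG : G.Connected) {k : ℕ} (hk : k ∉ Γ '' G.edgeSet) (u v : V) :
    cc G Γ k u = cc G Γ k v := by
  refine ConnectedComponent.sound ?_
  refine (hG.preconnected u v).mono ?_
  intro a b hab
  rw [Hg, deleteEdges_adj]
  exact ⟨hab, fun hm => hk ⟨s(a, b), (G.mem_edgeSet).mpr hab, hm⟩⟩

variable {α β : ℕ}

omit [Fintype V] in
lemma inj2 (hG : G.Connected) (hmd : IsMDColoring G Γ)
    (himg : Γ '' G.edgeSet = {α, β}) {u v : V}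
    (hα : cc G Γ α u = cc G Γ α v) (hβ : cc G Γ β u = cc G Γ β v) : u = v := by
  by_contra hne
  obtain ⟨i, hi⟩ := md_diff hmd hne
  by_cases hiα : i = α
  · exact hi (hiα ▸ hα)
  by_cases hiβ : i = β
  · exact hi (hiβ ▸ hβ)
  · exact hi (cc_unused hG (by rw [himg]; simp [hiα, hiβ]) u v)

omit [Fintype V] in
lemma edge_two (himg : Γ '' G.edgeSet = {α, β}) {u v : V} (h : G.Adj u v) :
    Γ s(u, v) = α ∨ Γ s(u, v) = β := by
  have : Γ s(u, v) ∈ ({α, β} : Set ℕ) :=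
    himg ▸ Set.mem_image_of_mem Γ ((G.mem_edgeSet).mpr h)
  simpa using this

lemma grid_lemma (hG : G.Connected) (hmd : IsMDColoring G Γ)
    (hcn : ∀ u v : V, u ≠ v → ¬ G.Adj u v →
      2 ≤ (G.neighborSet u ∩ G.neighborSet v).ncard)
    (hne : α ≠ β) (himg : Γ '' G.edgeSet = {α, β}) (v w : V) :
    ∃ z, cc G Γ α z = cc G Γ α v ∧ cc G Γ β z = cc G Γ β w := by
  by_cases h1 : cc G Γ α w = cc G Γ α v
  · exact ⟨w, h1, rfl⟩
  by_cases h2 : cc G Γ β v = cc G Γ β w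
  · exact ⟨v, rfl, h2⟩
  have hvw : v ≠ w := fun h => h1 (h ▸ rfl)
  have hnadj : ¬ G.Adj v w := by
    intro hadj
    rcases edge_two himg hadj with hc | hc
    · exact h2 (ccAdjEq hadj (by rw [hc]; exact hne))
    · exact h1 (ccAdjEq hadj (by rw [hc]; exact fun hh => hne hh.symm)).symm
  obtain ⟨g1, g2, hg12, hv1, hw1, hv2, hw2⟩ := two_common hcn hvw hnadj
  have htype : ∀ g, G.Adj v g → G.Adj w g →
      (cc G Γ α g = cc G Γ α v ∧ cc G Γ β g = cc G Γ β w) ∨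
      (cc G Γ α g = cc G Γ α w ∧ cc G Γ β g = cc G Γ β v) := by
    intro g hvg hwg
    rcases edge_two himg hvg with hcv | hcv <;> rcases edge_two himg hwg with hcw | hcw
    · -- (α, α) : β-components of v and w agree, contradiction
      exact absurd ((ccAdjEq hvg (by rw [hcv]; exact hne)).trans
        (ccAdjEq hwg (by rw [hcw]; exact hne)).symm) h2
    · -- (α, β) : bad type
      exact Or.inr ⟨(ccAdjEq hwg (by rw [hcw]; exact fun hh => hne hh.symm)).symm,
        (ccAdjEq hvg (by rw [hcv]; exact hne)).symm⟩
    · -- (β, α) : good type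
      exact Or.inl ⟨(ccAdjEq hvg (by rw [hcv]; exact fun hh => hne hh.symm)).symm,
        (ccAdjEq hwg (by rw [hcw]; exact hne)).symm⟩
    · -- (β, β) : α-components of v and w agree, contradiction
      exact absurd ((ccAdjEq hvg (by rw [hcv]; exact fun hh => hne hh.symm)).trans
        (ccAdjEq hwg (by rw [hcw]; exact fun hh => hne hh.symm)).symm).symm h1
  rcases htype g1 hv1 hw1 with t1 | t1
  · exact ⟨g1, t1⟩
  rcases htype g2 hv2 hw2 with t2 | t2
  · exact ⟨g2, t2⟩
  · exact absurd (inj2 hG hmd himg (t1.1.trans t2.1.symm) (t1.2.trans t2.2.symm)) hg12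

lemma clique_lemma (hG : G.Connected) (hmd : IsMDColoring G Γ)
    (hcn : ∀ u v : V, u ≠ v → ¬ G.Adj u v →
      2 ≤ (G.neighborSet u ∩ G.neighborSet v).ncard)
    (hne : α ≠ β) (himg : Γ '' G.edgeSet = {α, β}) {u v : V}
    (hβuv : cc G Γ β u = cc G Γ β v) (huv : u ≠ v) : G.Adj u v := by
  by_contra hnadj
  have hαuv : cc G Γ α u ≠ cc G Γ α v := fun h => huv (inj2 hG hmd himg h hβuv)
  -- an edge of colour β
  obtain ⟨pp, qq, hpq, hpqβ⟩ : ∃ p q, G.Adj p q ∧ Γ s(p, q) = β := by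
    refine exists_edge_of_mem_image (x := β) ?_
    rw [himg]; simp
  have hd : cc G Γ β pp ≠ cc G Γ β qq := hpqβ ▸ ccAdjNe hmd hpq
  obtain ⟨w, hwβ⟩ : ∃ w, cc G Γ β w ≠ cc G Γ β u := by
    by_cases h : cc G Γ β pp = cc G Γ β u
    · exact ⟨qq, fun hq => hd (h.trans hq.symm)⟩
    · exact ⟨pp, h⟩
  obtain ⟨z, hzα, hzβ⟩ := grid_lemma hG hmd hcn hne himg u w
  have hzβv : cc G Γ β z ≠ cc G Γ β v := by
    rw [hzβ]
    exact fun h => hwβ (h.trans hβuv.symm)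
  have hzαv : cc G Γ α z ≠ cc G Γ α v := by rw [hzα]; exact hαuv
  have hzv : z ≠ v := fun h => hzαv (h ▸ rfl)
  have hznadj : ¬ G.Adj z v := by
    intro hadj
    rcases edge_two himg hadj with hc | hc
    · exact hzβv (ccAdjEq hadj (by rw [hc]; exact hne))
    · exact hzαv (ccAdjEq hadj (by rw [hc]; exact fun hh => hne hh.symm))
  obtain ⟨g1, g2, hg12, hz1, hv1, hz2, hv2⟩ := two_common hcn hzv hznadj
  have htype : ∀ g, G.Adj z g → G.Adj v g →
      (cc G Γ α g = cc G Γ α v ∧ cc G Γ β g = cc G Γ β z) := by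
    intro g hzg hvg
    rcases edge_two himg hzg with hcz | hcz <;> rcases edge_two himg hvg with hcv | hcv
    · exact absurd ((ccAdjEq hzg (by rw [hcz]; exact hne)).trans
        (ccAdjEq hvg (by rw [hcv]; exact hne)).symm) hzβv
    · exact ⟨(ccAdjEq hvg (by rw [hcv]; exact fun hh => hne hh.symm)).symm,
        (ccAdjEq hzg (by rw [hcz]; exact hne)).symm⟩
    · -- g = u, so v is adjacent to u : contradiction
      have hgα : cc G Γ α g = cc G Γ α u := by
        rw [← hzα]; exact (ccAdjEq hzg (by rw [hcz]; exact fun hh => hne hh.symm)).symm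
      have hgβ : cc G Γ β g = cc G Γ β u :=
        ((ccAdjEq hvg (by rw [hcv]; exact hne)).symm).trans hβuv.symm
      have : g = u := inj2 hG hmd himg hgα hgβ
      exact absurd (this ▸ hvg).symm hnadj
    · exact absurd ((ccAdjEq hzg (by rw [hcz]; exact fun hh => hne hh.symm)).trans
        (ccAdjEq hvg (by rw [hcv]; exact fun hh => hne hh.symm)).symm) hzαv
  obtain t1 := htype g1 hz1 hv1
  obtain t2 := htype g2 hz2 hv2
  exact hg12 (inj2 hG hmd himg (t1.1.trans t2.1.symm) (t1.2.trans t2.2.symm))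

lemma classify (hG : G.Connected) (hmd : IsMDColoring G Γ)
    (hcn : ∀ u v : V, u ≠ v → ¬ G.Adj u v →
      2 ≤ (G.neighborSet u ∩ G.neighborSet v).ncard)
    (hne : α ≠ β) (himg : Γ '' G.edgeSet = {α, β}) :
    ∃ s t : ℕ, 2 ≤ s ∧ 2 ≤ t ∧
      Nonempty (G ≃g ((⊤ : SimpleGraph (Fin s)) □ (⊤ : SimpleGraph (Fin t)))) := by
  classical
  have himg' : Γ '' G.edgeSet = {β, α} := by rw [himg]; exact Set.pair_comm α β
  have adj_iff : ∀ u v : V, G.Adj u v ↔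
      ((cc G Γ α u ≠ cc G Γ α v ∧ cc G Γ β u = cc G Γ β v) ∨
       (cc G Γ β u ≠ cc G Γ β v ∧ cc G Γ α u = cc G Γ α v)) := by
    intro u v
    constructor
    · intro h
      rcases edge_two himg h with hc | hc
      · exact Or.inl ⟨hc ▸ ccAdjNe hmd h, ccAdjEq h (by rw [hc]; exact hne)⟩
      · exact Or.inr ⟨hc ▸ ccAdjNe hmd h,
          ccAdjEq h (by rw [hc]; exact fun hh => hne hh.symm)⟩
    · rintro (⟨h1, h2⟩ | ⟨h1, h2⟩)
      · exact clique_lemma hG hmd hcn hne himg h2 (fun h => h1 (h ▸ rfl))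
      · exact clique_lemma hG hmd hcn (Ne.symm hne) himg' h2 (fun h => h1 (h ▸ rfl))
  haveI : Finite ((Hg G Γ α).ConnectedComponent) :=
    Finite.of_surjective ((Hg G Γ α).connectedComponentMk) (fun c => c.exists_rep)
  haveI : Finite ((Hg G Γ β).ConnectedComponent) :=
    Finite.of_surjective ((Hg G Γ β).connectedComponentMk) (fun c => c.exists_rep)
  haveI : Fintype ↥(Set.range (cc G Γ α)) := (Set.toFinite _).fintype
  haveI : Fintype ↥(Set.range (cc G Γ β)) := (Set.toFinite _).fintype
  set sα := Fintype.card ↥(Set.range (cc G Γ α)) with hsα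
  set sβ := Fintype.card ↥(Set.range (cc G Γ β)) with hsβ
  let eqα : ↥(Set.range (cc G Γ α)) ≃ Fin sα := Fintype.equivFin _
  let eqβ : ↥(Set.range (cc G Γ β)) ≃ Fin sβ := Fintype.equivFin _
  let F : V → Fin sα × Fin sβ := fun v =>
    (eqα ⟨cc G Γ α v, Set.mem_range_self v⟩, eqβ ⟨cc G Γ β v, Set.mem_range_self v⟩)
  have hFα : ∀ u v : V, (F u).1 = (F v).1 ↔ cc G Γ α u = cc G Γ α v := by
    intro u v
    simp only [F, EmbeddingLike.apply_eq_iff_eq, Subtype.mk_eq_mk]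
  have hFβ : ∀ u v : V, (F u).2 = (F v).2 ↔ cc G Γ β u = cc G Γ β v := by
    intro u v
    simp only [F, EmbeddingLike.apply_eq_iff_eq, Subtype.mk_eq_mk]
  have hbij : Function.Bijective F := by
    constructor
    · intro u v h
      rw [Prod.ext_iff] at h
      exact inj2 hG hmd himg ((hFα u v).mp h.1) ((hFβ u v).mp h.2)
    · rintro ⟨i, j⟩
      obtain ⟨x, hx⟩ := (eqα.symm i).2
      obtain ⟨y, hy⟩ := (eqβ.symm j).2
      obtain ⟨z, hz1, hz2⟩ := grid_lemma hG hmd hcn hne himg x y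
      refine ⟨z, Prod.ext ?_ ?_⟩
      · show eqα ⟨cc G Γ α z, _⟩ = i
        have : (⟨cc G Γ α z, Set.mem_range_self z⟩ : ↥(Set.range (cc G Γ α))) = eqα.symm i :=
          Subtype.ext (hz1.trans hx)
        rw [this, Equiv.apply_symm_apply]
      · show eqβ ⟨cc G Γ β z, _⟩ = j
        have : (⟨cc G Γ β z, Set.mem_range_self z⟩ : ↥(Set.range (cc G Γ β))) = eqβ.symm j :=
          Subtype.ext (hz2.trans hy)
        rw [this, Equiv.apply_symm_apply]
  -- sizes
  obtain ⟨ua, va, hadja, hCa⟩ : ∃ u v, G.Adj u v ∧ Γ s(u, v) = α :=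
    exists_edge_of_mem_image (by rw [himg]; simp)
  obtain ⟨ub, vb, hadjb, hCb⟩ : ∃ u v, G.Adj u v ∧ Γ s(u, v) = β :=
    exists_edge_of_mem_image (by rw [himg]; simp)
  have hα2 : 2 ≤ sα := by
    rw [hsα]
    refine Fintype.one_lt_card_iff.mpr
      ⟨⟨cc G Γ α ua, Set.mem_range_self ua⟩, ⟨cc G Γ α va, Set.mem_range_self va⟩, ?_⟩
    have := hCa ▸ ccAdjNe hmd hadja
    exact fun h => this (congrArg Subtype.val h)
  have hβ2 : 2 ≤ sβ := by
    rw [hsβ]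
    refine Fintype.one_lt_card_iff.mpr
      ⟨⟨cc G Γ β ub, Set.mem_range_self ub⟩, ⟨cc G Γ β vb, Set.mem_range_self vb⟩, ?_⟩
    have := hCb ▸ ccAdjNe hmd hadjb
    exact fun h => this (congrArg Subtype.val h)
  refine ⟨sα, sβ, hα2, hβ2, ⟨⟨Equiv.ofBijective F hbij, ?_⟩⟩⟩
  intro u v
  show ((⊤ : SimpleGraph (Fin sα)) □ (⊤ : SimpleGraph (Fin sβ))).Adj (F u) (F v) ↔ G.Adj u v
  rw [boxProd_adj, top_adj, top_adj, adj_iff u v]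
  constructor
  · rintro (⟨h1, h2⟩ | ⟨h1, h2⟩)
    · exact Or.inl ⟨fun h => h1 ((hFα u v).mpr h), (hFβ u v).mp h2⟩
    · exact Or.inr ⟨fun h => h1 ((hFβ u v).mpr h), (hFα u v).mp h2⟩
  · rintro (⟨h1, h2⟩ | ⟨h1, h2⟩)
    · exact Or.inl ⟨fun h => h1 ((hFα u v).mp h), (hFβ u v).mpr h2⟩
    · exact Or.inr ⟨fun h => h1 ((hFβ u v).mp h), (hFα u v).mpr h2⟩

omit [Fintype V] in
lemma const_MD : IsMDColoring G (fun _ => 0) := by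
  intro u v huv
  refine ⟨0, G.edgeSet, le_refl _, fun _ _ => rfl, fun hr => huv ?_⟩
  refine walk_invariant id ?_ hr
  intro a b hab
  rw [deleteEdges_adj] at hab
  exact absurd ((G.mem_edgeSet).mpr hab.1) hab.2

lemma product_coloring {s t : ℕ} (hs : 2 ≤ s) (ht : 2 ≤ t)
    (e : G ≃g ((⊤ : SimpleGraph (Fin s)) □ (⊤ : SimpleGraph (Fin t)))) :
    ∃ Γ : Sym2 V → ℕ, IsMDColoring G Γ ∧ (Γ '' G.edgeSet).ncard = 2 := by
  classical
  let Γ : Sym2 V → ℕ := Sym2.lift ⟨fun u v => if (e u).1 = (e v).1 then 0 else 1, by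
    intro u v; simp only [eq_comm]⟩
  have hΓ : ∀ u v : V, Γ s(u, v) = if (e u).1 = (e v).1 then 0 else 1 := fun u v => rfl
  refine ⟨Γ, ?_, ?_⟩
  · -- MD coloring
    intro u v huv
    by_cases hfst : (e u).1 = (e v).1
    · have hsnd : (e u).2 ≠ (e v).2 := by
        intro h2
        exact huv (e.toEquiv.injective (Prod.ext hfst h2))
      refine ⟨0, {x | x ∈ G.edgeSet ∧ Γ x = 0}, fun x hx => hx.1, fun x hx => hx.2,
        fun hr => hsnd ?_⟩
      refine walk_invariant (fun w => (e w).2) ?_ hr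
      intro a b hab
      rw [deleteEdges_adj] at hab
      obtain ⟨hadj, hnm⟩ := hab
      have hΓab : Γ s(a, b) ≠ 0 := fun h0 => hnm ⟨(G.mem_edgeSet).mpr hadj, h0⟩
      have hfstab : (e a).1 ≠ (e b).1 := by
        intro h
        exact hΓab (by rw [hΓ a b, if_pos h])
      have hPadj := e.map_rel_iff.mpr hadj
      rcases boxProd_adj.mp hPadj with ⟨h1, h2⟩ | ⟨h1, h2⟩
      · exact h2
      · exact absurd h2 hfstab
    · refine ⟨1, {x | x ∈ G.edgeSet ∧ Γ x = 1}, fun x hx => hx.1, fun x hx => hx.2,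
        fun hr => hfst ?_⟩
      refine walk_invariant (fun w => (e w).1) ?_ hr
      intro a b hab
      rw [deleteEdges_adj] at hab
      obtain ⟨hadj, hnm⟩ := hab
      have hΓab : Γ s(a, b) ≠ 1 := fun h0 => hnm ⟨(G.mem_edgeSet).mpr hadj, h0⟩
      by_contra hne1
      exact hΓab (by rw [hΓ a b, if_neg hne1])
  · -- the image is {0, 1}
    have himg : Γ '' G.edgeSet = {0, 1} := by
      apply Set.Subset.antisymm
      · rintro x ⟨e', he', rfl⟩
        induction e' using Sym2.ind with
        | _ a b =>
          rw [hΓ a b]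
          split <;> simp
      · have ha0 : (⟨0, by omega⟩ : Fin s) ≠ ⟨1, by omega⟩ := by simp [Fin.ext_iff]
        have hb0 : (⟨0, by omega⟩ : Fin t) ≠ ⟨1, by omega⟩ := by simp [Fin.ext_iff]
        rintro x (rfl | rfl)
        · -- colour 0 : an edge inside a row
          refine ⟨s(e.symm (⟨0, by omega⟩, ⟨0, by omega⟩), e.symm (⟨0, by omega⟩, ⟨1, by omega⟩)),
            (G.mem_edgeSet).mpr ?_, ?_⟩
          · exact e.symm.map_rel_iff.mpr (boxProd_adj.mpr (Or.inr ⟨top_adj _ _ |>.mpr hb0, rfl⟩))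
          · rw [hΓ, e.apply_symm_apply, e.apply_symm_apply]
            simp
        · -- colour 1 : an edge inside a column
          refine ⟨s(e.symm (⟨0, by omega⟩, ⟨0, by omega⟩), e.symm (⟨1, by omega⟩, ⟨0, by omega⟩)),
            (G.mem_edgeSet).mpr ?_, ?_⟩
          · exact e.symm.map_rel_iff.mpr (boxProd_adj.mpr (Or.inl ⟨top_adj _ _ |>.mpr ha0, rfl⟩))
          · rw [hΓ, e.apply_symm_apply, e.apply_symm_apply]
            simp [Fin.ext_iff]
    rw [himg]
    exact Set.ncard_pair (by norm_num)

end PartII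

end MDProof

/-- If any two nonadjacent vertices of a connected graph `G` have at least
two common neighbors, then `md(G) ≤ 2`, with equality iff `G` is the
Cartesian product `K_s □ K_t` of two complete graphs with `s, t ≥ 2`. -/
theorem stmt_16 [Fintype V] (G : SimpleGraph V) (hG : G.Connected)
    (hcn : ∀ u v : V, u ≠ v → ¬ G.Adj u v →
      2 ≤ (G.neighborSet u ∩ G.neighborSet v).ncard) :
    mdNumber G ≤ 2 ∧
      (mdNumber G = 2 ↔ ∃ s t : ℕ, 2 ≤ s ∧ 2 ≤ t ∧
        Nonempty (G ≃g ((⊤ : SimpleGraph (Fin s)) □ (⊤ : SimpleGraph (Fin t))))) := by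
  classical
  have hbdd : ∀ k ∈ {k | ∃ Γ : Sym2 V → ℕ, IsMDColoring G Γ ∧ (Γ '' G.edgeSet).ncard = k},
      k ≤ 2 := by
    rintro k ⟨Γ, hmd, rfl⟩
    exact MDProof.ncard_le_two hmd hcn
  have hSne : Set.Nonempty
      {k | ∃ Γ : Sym2 V → ℕ, IsMDColoring G Γ ∧ (Γ '' G.edgeSet).ncard = k} :=
    ⟨_, (fun _ => (0 : ℕ)), MDProof.const_MD, rfl⟩
  have h1 : mdNumber G ≤ 2 := csSup_le hSne hbdd
  refine ⟨h1, ?_, ?_⟩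
  · intro h2
    have hmem : 2 ∈ {k | ∃ Γ : Sym2 V → ℕ, IsMDColoring G Γ ∧ (Γ '' G.edgeSet).ncard = k} := by
      have := Nat.sSup_mem hSne ⟨2, hbdd⟩
      rwa [show sSup {k | ∃ Γ : Sym2 V → ℕ, IsMDColoring G Γ ∧ (Γ '' G.edgeSet).ncard = k} = 2
        from h2] at this
    obtain ⟨Γ, hmd, hcard⟩ := hmem
    obtain ⟨α, β, hab, himg⟩ := Set.ncard_eq_two.mp hcard
    exact MDProof.classify hG hmd hcn hab himg
  · rintro ⟨s, t, hs, ht, ⟨e⟩⟩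
    obtain ⟨Γ, hmd, hcard⟩ := MDProof.product_coloring hs ht e
    exact le_antisymm h1 (le_csSup ⟨2, hbdd⟩ ⟨Γ, hmd, hcard⟩)
end

section
/- Suppose G is a ⌊n/2⌋-connected graph on n ≥ 4 vertices (where n = |V(G)|). Then md(G) ≤ 2. -/
open SimpleGraph

variable {V : Type*}

def mdRel (G : SimpleGraph V) (Γ : Sym2 V → ℕ) (i : ℕ) (u v : V) : Prop :=
  (G.deleteEdges {e | Γ e = i}).Reachable u v

lemma mdRel_refl (G : SimpleGraph V) (Γ : Sym2 V → ℕ) (i : ℕ) (u : V) :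
    mdRel G Γ i u u := Reachable.refl u

lemma mdRel_symm {G : SimpleGraph V} {Γ : Sym2 V → ℕ} {i : ℕ} {u v : V}
    (h : mdRel G Γ i u v) : mdRel G Γ i v u := h.symm

lemma mdRel_trans {G : SimpleGraph V} {Γ : Sym2 V → ℕ} {i : ℕ} {u v w : V}
    (h : mdRel G Γ i u v) (h' : mdRel G Γ i v w) : mdRel G Γ i u w := h.trans h'

lemma mdRel_of_adj {G : SimpleGraph V} {Γ : Sym2 V → ℕ} {i : ℕ} {u v : V}
    (h : G.Adj u v) (hne : Γ s(u,v) ≠ i) : mdRel G Γ i u v := by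
  refine Adj.reachable ?_
  rw [SimpleGraph.deleteEdges_adj]
  exact ⟨h, by simpa using hne⟩

lemma not_mdRel_of_sep {G : SimpleGraph V} {Γ : Sym2 V → ℕ} {i : ℕ} {u v : V}
    (h : separatesColor G Γ i u v) : ¬ mdRel G Γ i u v := by
  obtain ⟨F, hFsub, hFcol, hnr⟩ := h
  intro hr
  refine hnr (hr.mono ?_)
  exact SimpleGraph.deleteEdges_anti (fun e he => hFcol e he)

lemma mdRel_ne {G : SimpleGraph V} {Γ : Sym2 V → ℕ} {i : ℕ} {u v : V}
    (h : ¬ mdRel G Γ i u v) : u ≠ v := by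
  rintro rfl; exact h (mdRel_refl G Γ i u)

/-- A `⌊n/2⌋`-connected graph on `n ≥ 4` vertices has `md(G) ≤ 2`. -/
theorem stmt_17 [Fintype V] (G : SimpleGraph V)
    (hn : 4 ≤ Fintype.card V)
    (hconn : ∀ S : Set V, S.ncard < Fintype.card V / 2 →
      (G.induce Sᶜ).Connected) :
    mdNumber G ≤ 2 := by
  classical
  set n := Fintype.card V with hndef
  -- minimum degree at least n/2
  have hdeg : ∀ u : V, n / 2 ≤ (G.neighborFinset u).card := by
    intro u
    by_contra hlt
    push_neg at hlt
    have hS : ((G.neighborFinset u : Set V)).ncard < n / 2 := by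
      rwa [Set.ncard_coe_finset]
    have hc := hconn _ hS
    have hu : u ∈ (↑(G.neighborFinset u) : Set V)ᶜ := by simp
    have hcard2 : 1 < ((G.neighborFinset u)ᶜ : Finset V).card := by
      have h1 : ((G.neighborFinset u)ᶜ : Finset V).card = n - (G.neighborFinset u).card := by
        simp [Finset.card_compl, hndef]
      omega
    obtain ⟨w, hw, hwu⟩ := Finset.exists_mem_ne hcard2 u
    have hw' : w ∈ (↑(G.neighborFinset u) : Set V)ᶜ := by
      simpa using (Finset.mem_compl.mp hw)
    obtain ⟨p⟩ := hc.preconnected ⟨u, hu⟩ ⟨w, hw'⟩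
    cases p with
    | nil => exact hwu rfl
    | cons h q =>
      rename_i b
      have hadj : G.Adj u (b : V) := h
      exact b.2 (Finset.mem_coe.mpr ((SimpleGraph.mem_neighborFinset G u (b : V)).mpr hadj))
  -- common neighbours
  have hcommon : ∀ u v : V, u ≠ v → ¬ G.Adj u v → ∃ w, G.Adj u w ∧ G.Adj w v := by
    intro u v huv hnadj
    have hsub : G.neighborFinset u ∪ G.neighborFinset v ⊆ Finset.univ \ {u, v} := by
      intro w hw
      simp only [Finset.mem_union, SimpleGraph.mem_neighborFinset] at hw
      simp only [Finset.mem_sdiff, Finset.mem_univ, Finset.mem_insert, Finset.mem_singleton,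
        true_and]
      push_neg
      rcases hw with h | h
      · exact ⟨fun e => G.irrefl (e ▸ h), fun e => hnadj (e ▸ h)⟩
      · refine ⟨fun e => hnadj (e ▸ h).symm, fun e => G.irrefl (e ▸ h)⟩
    have hcard_sdiff : (Finset.univ \ ({u, v} : Finset V)).card = n - 2 := by
      rw [Finset.card_sdiff_of_subset (Finset.subset_univ _), Finset.card_univ]
      have : ({u, v} : Finset V).card = 2 := by
        rw [Finset.card_insert_of_notMem (by simpa using huv), Finset.card_singleton]
      rw [this, hndef]
    have h1 := Finset.card_le_card hsub
    have h2 := Finset.card_union_add_card_inter (G.neighborFinset u) (G.neighborFinset v)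
    have hu := hdeg u
    have hv := hdeg v
    have hpos : 0 < (G.neighborFinset u ∩ G.neighborFinset v).card := by omega
    obtain ⟨w, hw⟩ := Finset.card_pos.mp hpos
    rw [Finset.mem_inter, SimpleGraph.mem_neighborFinset, SimpleGraph.mem_neighborFinset] at hw
    exact ⟨w, hw.1, hw.2.symm⟩
  refine csSup_le' ?_
  rintro k ⟨Γ, hMD, rfl⟩
  by_contra hk3
  push_neg at hk3
  -- basic facts about the coloring
  have hsep_ne : ∀ u v : V, u ≠ v → ∃ i, ¬ mdRel G Γ i u v := by
    intro u v h
    obtain ⟨i, hi⟩ := hMD u v h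
    exact ⟨i, not_mdRel_of_sep hi⟩
  have hadj_sep : ∀ u v : V, G.Adj u v → ¬ mdRel G Γ (Γ s(u,v)) u v := by
    intro u v h
    obtain ⟨i, hi⟩ := hMD u v h.ne
    have hni := not_mdRel_of_sep hi
    by_cases hc : Γ s(u,v) = i
    · rwa [hc]
    · exact absurd (mdRel_of_adj h hc) hni
  have htwo : ∀ (u v : V) (i j l : ℕ), i ≠ j → i ≠ l → j ≠ l →
      ¬ mdRel G Γ i u v → ¬ mdRel G Γ j u v → ¬ mdRel G Γ l u v → False := by
    intro u v i j l hij hil hjl hi hj hl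
    have huv : u ≠ v := mdRel_ne hi
    by_cases hadj : G.Adj u v
    · by_cases h1 : Γ s(u,v) = i
      · exact hj (mdRel_of_adj hadj (by rw [h1]; exact hij))
      · exact hi (mdRel_of_adj hadj h1)
    · obtain ⟨w, hw1, hw2⟩ := hcommon u v huv hadj
      have key : ∀ c, ¬ mdRel G Γ c u v → c = Γ s(u,w) ∨ c = Γ s(w,v) := by
        intro c hcnr
        by_contra hcc
        push_neg at hcc
        exact hcnr (mdRel_trans (mdRel_of_adj hw1 (fun e => hcc.1 e.symm))
          (mdRel_of_adj hw2 (fun e => hcc.2 e.symm)))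
      rcases key i hi with h1 | h1 <;> rcases key j hj with h2 | h2 <;>
        rcases key l hl with h3 | h3 <;> omega
  -- extract three colors
  have himg : ∀ c ∈ Γ '' G.edgeSet, ∃ u v, G.Adj u v ∧ Γ s(u,v) = c := by
    rintro c ⟨e, he, rfl⟩
    revert he
    induction e using Sym2.ind with
    | _ u v => exact fun he => ⟨u, v, he, rfl⟩
  rw [Set.two_lt_ncard_iff (Set.toFinite _)] at hk3
  obtain ⟨c1, c2, c3, hm1, hm2, hm3, h12, h13, h23⟩ := hk3
  obtain ⟨u1, v1, hadj1, hc1e⟩ := himg c1 hm1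
  obtain ⟨u2, v2, hadj2, hc2e⟩ := himg c2 hm2
  obtain ⟨u3, v3, hadj3, hc3e⟩ := himg c3 hm3
  have e1a : ¬ mdRel G Γ c1 u1 v1 := by
    have := hadj_sep u1 v1 hadj1; rwa [hc1e] at this
  have e1b : ∀ j, j ≠ c1 → mdRel G Γ j u1 v1 := fun j hj =>
    mdRel_of_adj hadj1 (by rw [hc1e]; exact Ne.symm hj)
  have e2a : ¬ mdRel G Γ c2 u2 v2 := by
    have := hadj_sep u2 v2 hadj2; rwa [hc2e] at this
  have e3a : ¬ mdRel G Γ c3 u3 v3 := by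
    have := hadj_sep u3 v3 hadj3; rwa [hc3e] at this
  -- vertices w, t with ¬R c2 u1 w and ¬R c3 u1 t
  obtain ⟨w, hw2⟩ : ∃ w, ¬ mdRel G Γ c2 u1 w := by
    by_contra hcon; push_neg at hcon
    exact e2a (mdRel_trans (mdRel_symm (hcon u2)) (hcon v2))
  obtain ⟨t, ht3⟩ : ∃ t, ¬ mdRel G Γ c3 u1 t := by
    by_contra hcon; push_neg at hcon
    exact e3a (mdRel_trans (mdRel_symm (hcon u3)) (hcon v3))
  -- D(u1, w) ⊆ {c1, c2} and D(u1, t) ⊆ {c1, c3}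
  have hclaim_w : ∀ j, j ≠ c1 → j ≠ c2 → mdRel G Γ j u1 w := by
    intro j hj1 hj2
    by_contra hj
    by_cases h1w : mdRel G Γ c1 u1 w
    · have a1 : ¬ mdRel G Γ c1 v1 w := fun h => e1a (mdRel_trans h1w (mdRel_symm h))
      have a2 : ¬ mdRel G Γ c2 v1 w := fun h => hw2 (mdRel_trans (e1b c2 (Ne.symm h12)) h)
      have a3 : ¬ mdRel G Γ j v1 w := fun h => hj (mdRel_trans (e1b j hj1) h)
      exact htwo v1 w c1 c2 j h12 (Ne.symm hj1) (Ne.symm hj2) a1 a2 a3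
    · exact htwo u1 w c1 c2 j h12 (Ne.symm hj1) (Ne.symm hj2) h1w hw2 hj
  have hclaim_t : ∀ j, j ≠ c1 → j ≠ c3 → mdRel G Γ j u1 t := by
    intro j hj1 hj3
    by_contra hj
    by_cases h1t : mdRel G Γ c1 u1 t
    · have a1 : ¬ mdRel G Γ c1 v1 t := fun h => e1a (mdRel_trans h1t (mdRel_symm h))
      have a2 : ¬ mdRel G Γ c3 v1 t := fun h => ht3 (mdRel_trans (e1b c3 (Ne.symm h13)) h)
      have a3 : ¬ mdRel G Γ j v1 t := fun h => hj (mdRel_trans (e1b j hj1) h)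
      exact htwo v1 t c1 c3 j h13 (Ne.symm hj1) (Ne.symm hj3) a1 a2 a3
    · exact htwo u1 t c1 c3 j h13 (Ne.symm hj1) (Ne.symm hj3) h1t ht3 hj
  have hwt2 : ¬ mdRel G Γ c2 w t :=
    fun h => hw2 (mdRel_trans (hclaim_t c2 (Ne.symm h12) h23) (mdRel_symm h))
  have hwt3 : ¬ mdRel G Γ c3 w t :=
    fun h => ht3 (mdRel_trans (hclaim_w c3 (Ne.symm h13) (Ne.symm h23)) h)
  -- the central "star configuration" contradiction
  have caseA : ∀ x y z p : V,
      (¬ mdRel G Γ c1 x y) → (∀ j, j ≠ c1 → mdRel G Γ j x y) →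
      (¬ mdRel G Γ c2 x z) → (∀ j, j ≠ c2 → mdRel G Γ j x z) →
      (¬ mdRel G Γ c3 x p) → (∀ j, j ≠ c3 → mdRel G Γ j x p) → False := by
    intro x y z p hy1 hy2 hz1 hz2 hp1 hp2
    have sub : ∀ (c : ℕ) (q : V), (¬ mdRel G Γ c x q) → (∀ j, j ≠ c → mdRel G Γ j x q) →
        ∀ (s : V) (i j : ℕ), i ≠ j → ¬ mdRel G Γ i s x → ¬ mdRel G Γ j s x →
        ¬ mdRel G Γ c s x := by
      intro c q hq1 hq2 s i j hij hi hj hcsx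
      have hic : i ≠ c := by rintro rfl; exact hi hcsx
      have hjc : j ≠ c := by rintro rfl; exact hj hcsx
      have hiq : ¬ mdRel G Γ i s q := fun h => hi (mdRel_trans h (mdRel_symm (hq2 i hic)))
      have hjq : ¬ mdRel G Γ j s q := fun h => hj (mdRel_trans h (mdRel_symm (hq2 j hjc)))
      have hcq : ¬ mdRel G Γ c s q := fun h => hq1 (mdRel_trans (mdRel_symm hcsx) h)
      exact htwo s q i j c hij hic hjc hiq hjq hcq
    have huniq : ∀ (s : V) (i j : ℕ), i ≠ j → ¬ mdRel G Γ i s x → ¬ mdRel G Γ j s x → False := by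
      intro s i j hij hi hj
      exact htwo s x c1 c2 c3 h12 h13 h23 (sub c1 y hy1 hy2 s i j hij hi hj)
        (sub c2 z hz1 hz2 s i j hij hi hj) (sub c3 p hp1 hp2 s i j hij hi hj)
    have hnbr : ∀ (c : ℕ) (q : V), (¬ mdRel G Γ c x q) → (∀ j, j ≠ c → mdRel G Γ j x q) →
        ∀ s : V, G.Adj q s → s = x ∨ ¬ mdRel G Γ c s x := by
      intro c q hq1 hq2 s hqs
      by_cases hsx : s = x
      · exact Or.inl hsx
      · refine Or.inr fun hc => ?_
        have hqsnr : ¬ mdRel G Γ c q s := fun h => hq1 (mdRel_symm (mdRel_trans h hc))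
        have hΓqs : Γ s(q,s) = c := by
          by_contra hne
          exact hqsnr (mdRel_of_adj hqs hne)
        obtain ⟨i, hi⟩ := hsep_ne s x hsx
        have hic : i ≠ c := by rintro rfl; exact hi hc
        have hA : mdRel G Γ i q s := mdRel_of_adj hqs (by rw [hΓqs]; exact Ne.symm hic)
        have hB : mdRel G Γ i x q := hq2 i hic
        exact hi (mdRel_symm (mdRel_trans hB hA))
    set C : ℕ → Finset V := fun c => Finset.univ.filter (fun s => ¬ mdRel G Γ c s x) with hCdef
    have hmemC : ∀ (c : ℕ) (s : V), s ∈ C c ↔ ¬ mdRel G Γ c s x := by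
      intro c s
      simp [hCdef]
    have hCdeg : ∀ (c : ℕ) (q : V), (¬ mdRel G Γ c x q) → (∀ j, j ≠ c → mdRel G Γ j x q) →
        n / 2 ≤ (C c).card := by
      intro c q hq1 hq2
      have hqC : q ∈ C c := (hmemC c q).mpr (fun h => hq1 (mdRel_symm h))
      have hsub : G.neighborFinset q ⊆ insert x ((C c).erase q) := by
        intro s hs
        have hadj : G.Adj q s := (SimpleGraph.mem_neighborFinset G q s).mp hs
        rcases hnbr c q hq1 hq2 s hadj with rfl | hns
        · exact Finset.mem_insert_self _ _
        · exact Finset.mem_insert_of_mem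
            (Finset.mem_erase.mpr ⟨hadj.ne', (hmemC c s).mpr hns⟩)
      have h1 := Finset.card_le_card hsub
      have h2 : (insert x ((C c).erase q)).card ≤ ((C c).erase q).card + 1 :=
        Finset.card_insert_le _ _
      have h3 : ((C c).erase q).card = (C c).card - 1 := Finset.card_erase_of_mem hqC
      have h4 : 1 ≤ (C c).card := Finset.card_pos.mpr ⟨q, hqC⟩
      have h5 := hdeg q
      omega
    have d1 := hCdeg c1 y hy1 hy2
    have d2 := hCdeg c2 z hz1 hz2
    have d3 := hCdeg c3 p hp1 hp2
    have hd12 : Disjoint (C c1) (C c2) := by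
      rw [Finset.disjoint_left]
      intro s hs1 hs2
      exact huniq s c1 c2 h12 ((hmemC c1 s).mp hs1) ((hmemC c2 s).mp hs2)
    have hd3 : Disjoint (C c1 ∪ C c2) (C c3) := by
      rw [Finset.disjoint_left]
      intro s hs hs3
      rcases Finset.mem_union.mp hs with hs1 | hs2
      · exact huniq s c1 c3 h13 ((hmemC c1 s).mp hs1) ((hmemC c3 s).mp hs3)
      · exact huniq s c2 c3 h23 ((hmemC c2 s).mp hs2) ((hmemC c3 s).mp hs3)
    have hxnot : ∀ c : ℕ, x ∉ C c := by
      intro c hx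
      exact ((hmemC c x).mp hx) (mdRel_refl G Γ c x)
    have hsubU : C c1 ∪ C c2 ∪ C c3 ⊆ Finset.univ.erase x := by
      intro s hs
      refine Finset.mem_erase.mpr ⟨?_, Finset.mem_univ s⟩
      rintro rfl
      rcases Finset.mem_union.mp hs with hs' | hs3
      · rcases Finset.mem_union.mp hs' with hs1 | hs2
        · exact hxnot c1 hs1
        · exact hxnot c2 hs2
      · exact hxnot c3 hs3
    have hcardU : (C c1 ∪ C c2 ∪ C c3).card = (C c1).card + (C c2).card + (C c3).card := by
      rw [Finset.card_union_of_disjoint hd3, Finset.card_union_of_disjoint hd12]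
    have hle := Finset.card_le_card hsubU
    have herase : (Finset.univ.erase x).card = n - 1 := by
      rw [Finset.card_erase_of_mem (Finset.mem_univ x), Finset.card_univ]
    omega
  -- final case analysis
  by_cases hc1w : mdRel G Γ c1 u1 w
  · by_cases hc1t : mdRel G Γ c1 u1 t
    · refine caseA u1 v1 w t e1a e1b hw2 ?_ ht3 ?_
      · intro j hj
        by_cases hj1 : j = c1
        · rw [hj1]; exact hc1w
        · exact hclaim_w j hj1 hj
      · intro j hj
        by_cases hj1 : j = c1
        · rw [hj1]; exact hc1t
        · exact hclaim_t j hj1 hj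
    · have a1 : ¬ mdRel G Γ c1 w t := fun h => hc1t (mdRel_trans hc1w h)
      exact htwo w t c1 c2 c3 h12 h13 h23 a1 hwt2 hwt3
  · by_cases hc1t : mdRel G Γ c1 u1 t
    · have a1 : ¬ mdRel G Γ c1 w t := fun h => hc1w (mdRel_trans hc1t (mdRel_symm h))
      exact htwo w t c1 c2 c3 h12 h13 h23 a1 hwt2 hwt3
    · -- both c1-separated: use a common neighbour of w and t
      have hwt_ne : w ≠ t := mdRel_ne hwt2
      have hwt_nadj : ¬ G.Adj w t := by
        intro hadj
        by_cases he : Γ s(w,t) = c2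
        · exact hwt3 (mdRel_of_adj hadj (by rw [he]; exact h23))
        · exact hwt2 (mdRel_of_adj hadj he)
      obtain ⟨s, hws, hst⟩ := hcommon w t hwt_ne hwt_nadj
      have ha1 : ¬ mdRel G Γ (Γ s(w,s)) w s := hadj_sep w s hws
      have ha2 : ∀ j, j ≠ Γ s(w,s) → mdRel G Γ j w s := fun j hj =>
        mdRel_of_adj hws (Ne.symm hj)
      have hb1 : ¬ mdRel G Γ (Γ s(s,t)) s t := hadj_sep s t hst
      have hb2 : ∀ j, j ≠ Γ s(s,t) → mdRel G Γ j s t := fun j hj =>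
        mdRel_of_adj hst (Ne.symm hj)
      have hc2ab : c2 = Γ s(w,s) ∨ c2 = Γ s(s,t) := by
        by_contra hcc; push_neg at hcc
        exact hwt2 (mdRel_trans (ha2 c2 hcc.1) (hb2 c2 hcc.2))
      have hc3ab : c3 = Γ s(w,s) ∨ c3 = Γ s(s,t) := by
        by_contra hcc; push_neg at hcc
        exact hwt3 (mdRel_trans (ha2 c3 hcc.1) (hb2 c3 hcc.2))
      rcases hc2ab with h2a | h2b
      · rcases hc3ab with h3a | h3b
        · exact h23 (h2a.trans h3a.symm)
        · -- Γ s(w,s) = c2, Γ s(s,t) = c3 : star configuration at s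
          refine caseA s u1 w t ?_ ?_ ?_ ?_ ?_ ?_
          · intro h
            exact hc1w (mdRel_symm (mdRel_trans (ha2 c1 (by rw [← h2a]; exact h12)) h))
          · intro j hj
            by_cases hjc2 : j = c2
            · subst hjc2
              refine mdRel_trans (hb2 j (by rw [← h3b]; exact h23))
                (mdRel_symm (hclaim_t j (Ne.symm h12) h23))
            · exact mdRel_trans (mdRel_symm (ha2 j (by rw [← h2a]; exact hjc2)))
                (mdRel_symm (hclaim_w j hj hjc2))
          · intro h
            exact ha1 (by rw [← h2a]; exact mdRel_symm h)
          · intro j hj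
            exact mdRel_symm (ha2 j (by rw [← h2a]; exact hj))
          · intro h
            exact hb1 (by rw [← h3b]; exact h)
          · intro j hj
            exact hb2 j (by rw [← h3b]; exact hj)
      · rcases hc3ab with h3a | h3b
        · -- Γ s(w,s) = c3, Γ s(s,t) = c2 : u1 and s are triply separated
          have B1 : ¬ mdRel G Γ c1 u1 s := fun h =>
            hc1w (mdRel_trans h (mdRel_symm (ha2 c1 (by rw [← h3a]; exact h13))))
          have B2 : ¬ mdRel G Γ c2 u1 s := fun h =>
            hw2 (mdRel_trans h (mdRel_symm (ha2 c2 (by rw [← h3a]; exact h23))))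
          have B3 : ¬ mdRel G Γ c3 u1 s := by
            intro h
            have hws' : mdRel G Γ c3 w s :=
              mdRel_trans (mdRel_symm (hclaim_w c3 (Ne.symm h13) (Ne.symm h23))) h
            rw [← h3a] at ha1
            exact ha1 hws'
          exact htwo u1 s c1 c2 c3 h12 h13 h23 B1 B2 B3
        · exact h23 (h2b.trans h3b.symm)
end
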